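/- arXiv:1606.06998 — 5 statements merged into one kernel-verified Lean document; each statement's English description precedes it below -/
import Mathlib

section
/- Let (P(t), t ≥ 0) be a stochastic process with values in the natural numbers such that almost surely the map t ↦ P(t) is nondecreasing, and such that for every t > 0 the random variable P(t) has the Poisson distribution with parameter t. Then for every ε > 0, almost surely lim_{t → ∞} (P(t) − t)/t^{1/2+ε} = 0. -/
/-!
Chernoff's bound for a Poisson variable `X` of parameter `t` gives
`ℙ(|X - t| ≥ a) ≤ 2 exp(-a² / 4t)` for `0 ≤ a ≤ 2t`. With `a = n ^ β` and `1/2 < β < 1/2 + ε`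
these probabilities are summable over the integer times `n`, so by Borel–Cantelli almost surely
`|P(n) - n| ≤ n ^ β` for all large `n`. Between consecutive integers the monotone path moves
`P(t) - t` by at most one more, which is negligible against `t ^ (1/2 + ε)`.
-/

open MeasureTheory ProbabilityTheory Filter Set Topology Asymptotics

open scoped ENNReal Nat

theorem summable_exp_neg_mul_rpow {b p : ℝ} (hb : 0 < b) (hp : 0 < p) :
    Summable fun n : ℕ => Real.exp (-b * (n : ℝ) ^ p) := by
  have hpow : Tendsto (fun n : ℕ => (n : ℝ) ^ p) atTop atTop :=
    (tendsto_rpow_atTop hp).comp tendsto_natCast_atTop_atTop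
  have ho := (isLittleO_exp_neg_mul_rpow_atTop hb (-2 / p)).comp_tendsto hpow
  refine summable_of_isBigO_nat (Real.summable_nat_rpow.2 (by norm_num : (-2 : ℝ) < -1))
    (ho.isBigO.congr_right fun n => ?_)
  simp only [Function.comp_apply]
  rw [← Real.rpow_mul (Nat.cast_nonneg n), mul_div_cancel₀ _ hp.ne']

theorem abs_sub_le_of_monotoneOn {f : ℝ → ℝ} {S : Set ℝ} (hf : MonotoneOn f S)
    {a b t c : ℝ} (ha : a ∈ S) (hb : b ∈ S) (ht : t ∈ S) (hat : a ≤ t) (htb : t ≤ b)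
    (hfa : |f a - a| ≤ c) (hfb : |f b - b| ≤ c) : |f t - t| ≤ c + (b - a) := by
  have h₁ := hf ha ht hat
  have h₂ := hf ht hb htb
  rw [abs_le] at hfa hfb ⊢
  constructor <;> linarith

theorem tendsto_sub_div_rpow_of_monotoneOn {f : ℝ → ℝ} (hf : MonotoneOn f (Ici 0))
    {β γ : ℝ} (hβ : 0 ≤ β) (hβγ : β < γ)
    (hfn : ∀ᶠ n : ℕ in atTop, |f n - n| ≤ (n : ℝ) ^ β) :
    Tendsto (fun t => (f t - t) / t ^ γ) atTop (𝓝 0) := by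
  obtain ⟨N, hN⟩ := eventually_atTop.1 hfn
  have hbound : ∀ t : ℝ, max (N : ℝ) 1 ≤ t → |f t - t| ≤ (2 ^ β + 1) * t ^ β := by
    intro t ht
    have ht1 : 1 ≤ t := le_of_max_le_right ht
    set n := ⌊t⌋₊
    have hnt : (n : ℝ) ≤ t := Nat.floor_le (by linarith)
    have htn : t < n + 1 := Nat.lt_floor_add_one t
    have hNn : N ≤ n := Nat.le_floor (le_of_max_le_left ht)
    have hpow_mono : (n : ℝ) ^ β ≤ ((n + 1 : ℕ) : ℝ) ^ β := by gcongr; simp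
    have hinterp := abs_sub_le_of_monotoneOn hf (mem_Ici.2 (Nat.cast_nonneg n))
      (mem_Ici.2 (Nat.cast_nonneg (n + 1)))
      (mem_Ici.2 (by linarith)) hnt (by push_cast; exact htn.le)
      ((hN n hNn).trans hpow_mono) (hN (n + 1) (by omega))
    calc |f t - t| ≤ ((n + 1 : ℕ) : ℝ) ^ β + 1 := by push_cast at hinterp ⊢; linarith
      _ ≤ (2 * t) ^ β + t ^ β := by
          gcongr
          · push_cast; linarith
          · exact Real.one_le_rpow ht1 hβ
      _ = (2 ^ β + 1) * t ^ β := by rw [Real.mul_rpow (by norm_num) (by linarith)]; ring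
  have hlim : Tendsto (fun t : ℝ => (2 ^ β + 1) * t ^ (-(γ - β))) atTop (𝓝 0) := by
    simpa only [mul_zero] using
      (tendsto_rpow_neg_atTop (by linarith : 0 < γ - β)).const_mul (2 ^ β + 1)
  refine squeeze_zero_norm' ?_ hlim
  filter_upwards [eventually_ge_atTop (max (N : ℝ) 1)] with t ht
  have ht0 : 0 < t := lt_of_lt_of_le one_pos (le_of_max_le_right ht)
  rw [norm_div, Real.norm_eq_abs, Real.norm_of_nonneg (Real.rpow_nonneg ht0.le _),
    div_le_iff₀ (Real.rpow_pos_of_pos ht0 _), mul_assoc, ← Real.rpow_add ht0]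
  simpa using hbound t ht

section Poisson

variable {Ω : Type*} [MeasurableSpace Ω] {μ : Measure Ω}

/-- No measurability of `X` is required: the tail estimates only use monotonicity and countable
subadditivity of `μ` on the fibres of `X`. -/
def HasPoissonLaw (μ : Measure Ω) (X : Ω → ℕ) (t : ℝ) : Prop :=
  ∀ k : ℕ, μ {ω | X ω = k} = ENNReal.ofReal (Real.exp (-t) * t ^ k / k !)

theorem measure_le_tsum_mul_measure_fiber (X : Ω → ℕ) {S : Set Ω} {f : ℕ → ℝ≥0∞}
    (hf : ∀ ω ∈ S, 1 ≤ f (X ω)) : μ S ≤ ∑' k, f k * μ {ω | X ω = k} := by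
  have hcover : S ⊆ ⋃ k, S ∩ {ω | X ω = k} := fun ω hω => mem_iUnion.2 ⟨X ω, hω, rfl⟩
  refine (measure_mono hcover).trans ((measure_iUnion_le _).trans (ENNReal.tsum_le_tsum ?_))
  intro k
  by_cases hk : (S ∩ {ω | X ω = k}).Nonempty
  · obtain ⟨ω, hωS, rfl⟩ := hk
    exact (measure_mono inter_subset_right).trans (le_mul_of_one_le_left' (hf ω hωS))
  · simp [not_nonempty_iff_eq_empty.1 hk]

theorem HasPoissonLaw.measure_le_mul_le_exp {X : Ω → ℕ} {t : ℝ} (hX : HasPoissonLaw μ X t)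
    (ht : 0 ≤ t) (s x : ℝ) :
    μ {ω | x ≤ s * X ω} ≤ ENNReal.ofReal (Real.exp (t * (Real.exp s - 1) - x)) := by
  set p : ℕ → ℝ := fun k => Real.exp (s * k - x) * (Real.exp (-t) * t ^ k / k !)
  -- `∑ₖ exp (s k) ℙ(X = k) = exp (t (exp s - 1))` is the Poisson moment generating function.
  have hp : HasSum p (Real.exp (t * (Real.exp s - 1) - x)) := by
    have h := (NormedSpace.expSeries_div_hasSum_exp (Real.exp s * t)).mul_left
      (Real.exp (-t - x))
    have hterm : (fun k : ℕ => Real.exp (-t - x) * ((Real.exp s * t) ^ k / k !)) = p := by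
      funext k
      simp only [p]
      rw [mul_pow, ← Real.exp_nat_mul, show s * k - x = k * s + -x by ring,
        show -t - x = -t + -x by ring, Real.exp_add, Real.exp_add]
      ring
    rwa [hterm, ← Real.exp_eq_exp_ℝ, ← Real.exp_add,
      show -t - x + Real.exp s * t = t * (Real.exp s - 1) - x by ring] at h
  calc μ {ω | x ≤ s * X ω}
      ≤ ∑' k : ℕ, ENNReal.ofReal (Real.exp (s * k - x)) * μ {ω | X ω = k} := by
        refine measure_le_tsum_mul_measure_fiber X fun ω hω => ?_
        exact ENNReal.one_le_ofReal.2 (Real.one_le_exp (sub_nonneg.2 hω))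
    _ = ∑' k : ℕ, ENNReal.ofReal (p k) :=
        tsum_congr fun k => by rw [hX k, ← ENNReal.ofReal_mul (Real.exp_pos _).le]
    _ = ENNReal.ofReal (Real.exp (t * (Real.exp s - 1) - x)) := by
        rw [← ENNReal.ofReal_tsum_of_nonneg (fun k => by positivity) hp.summable, hp.tsum_eq]

theorem HasPoissonLaw.measure_le_abs_sub_le {X : Ω → ℕ} {t : ℝ} (hX : HasPoissonLaw μ X t)
    (ht : 0 < t) {a : ℝ} (ha : 0 ≤ a) (hat : a ≤ 2 * t) :
    μ {ω | a ≤ |(X ω : ℝ) - t|} ≤ ENNReal.ofReal (2 * Real.exp (-(a ^ 2 / (4 * t)))) := by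
  -- `s = a / 2t` minimises the exponent `t s² - s a` obtained from `exp s - 1 ≤ s + s²`.
  set s := a / (2 * t)
  have hs0 : 0 ≤ s := by positivity
  have hs1 : s ≤ 1 := (div_le_one (by positivity)).2 hat
  have exp_le (r : ℝ) (hr : |r| ≤ 1) : Real.exp r - 1 ≤ r + r ^ 2 := by
    linarith [(abs_le.1 (Real.abs_exp_sub_one_sub_id_le hr)).2]
  have hts : t * s ^ 2 - s * a = -(a ^ 2 / (4 * t)) := by
    simp only [s]; field_simp; ring
  have hsplit : {ω | a ≤ |(X ω : ℝ) - t|} ⊆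
      {ω | s * (t + a) ≤ s * X ω} ∪ {ω | -s * (t - a) ≤ -s * X ω} := by
    intro ω hω
    rcases le_abs'.1 (show a ≤ |(X ω : ℝ) - t| from hω) with h | h
    · refine Or.inr (show -s * (t - a) ≤ -s * X ω from ?_)
      rw [neg_mul, neg_mul, neg_le_neg_iff]
      gcongr
      linarith
    · refine Or.inl (show s * (t + a) ≤ s * X ω from ?_)
      gcongr
      linarith
  have hupper : t * (Real.exp s - 1) - s * (t + a) ≤ -(a ^ 2 / (4 * t)) := by
    nlinarith [exp_le s (abs_le.2 ⟨by linarith, hs1⟩), hts]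
  have hlower : t * (Real.exp (-s) - 1) - -s * (t - a) ≤ -(a ^ 2 / (4 * t)) := by
    nlinarith [exp_le (-s) (abs_le.2 ⟨by linarith, by linarith⟩), hts]
  calc μ {ω | a ≤ |(X ω : ℝ) - t|}
      ≤ μ {ω | s * (t + a) ≤ s * X ω} + μ {ω | -s * (t - a) ≤ -s * X ω} :=
        (measure_mono hsplit).trans (measure_union_le _ _)
    _ ≤ ENNReal.ofReal (Real.exp (-(a ^ 2 / (4 * t)))) +
          ENNReal.ofReal (Real.exp (-(a ^ 2 / (4 * t)))) := by
        gcongr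
        · exact (hX.measure_le_mul_le_exp ht.le _ _).trans
            (ENNReal.ofReal_le_ofReal (Real.exp_le_exp.2 hupper))
        · exact (hX.measure_le_mul_le_exp ht.le _ _).trans
            (ENNReal.ofReal_le_ofReal (Real.exp_le_exp.2 hlower))
    _ = ENNReal.ofReal (2 * Real.exp (-(a ^ 2 / (4 * t)))) := by
        rw [← ENNReal.ofReal_add (by positivity) (by positivity), two_mul]

theorem HasPoissonLaw.measure_rpow_le_abs_sub_le {X : Ω → ℕ} {t : ℝ}
    (hX : HasPoissonLaw μ X t) (ht : 1 ≤ t) {β : ℝ} (hβ : β ≤ 1) :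
    μ {ω | t ^ β ≤ |(X ω : ℝ) - t|} ≤
      ENNReal.ofReal (2 * Real.exp (-(1 / 4) * t ^ (2 * β - 1))) := by
  have ht0 : 0 < t := by linarith
  have hsq : (t ^ β) ^ 2 / (4 * t) = 1 / 4 * t ^ (2 * β - 1) := by
    rw [← Real.rpow_natCast, ← Real.rpow_mul ht0.le, Real.rpow_sub ht0, Real.rpow_one]
    push_cast
    ring_nf
  calc μ {ω | t ^ β ≤ |(X ω : ℝ) - t|}
      ≤ ENNReal.ofReal (2 * Real.exp (-((t ^ β) ^ 2 / (4 * t)))) :=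
        hX.measure_le_abs_sub_le ht0 (Real.rpow_nonneg ht0.le β)
          ((Real.rpow_le_self_of_one_le ht hβ).trans (by linarith))
    _ = ENNReal.ofReal (2 * Real.exp (-(1 / 4) * t ^ (2 * β - 1))) := by rw [hsq, neg_mul]

theorem ae_eventually_abs_sub_le_rpow (X : ℕ → Ω → ℕ)
    (hX : ∀ n : ℕ, 0 < n → HasPoissonLaw μ (X n) n) {β : ℝ} (hβ : 1 / 2 < β) (hβ1 : β ≤ 1) :
    ∀ᵐ ω ∂μ, ∀ᶠ n : ℕ in atTop, |(X n ω : ℝ) - n| ≤ (n : ℝ) ^ β := by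
  -- Shifted by one, since `X 0` has no prescribed law.
  set B : ℕ → Set Ω := fun n =>
    {ω | (((n + 1 : ℕ) : ℝ)) ^ β ≤ |(X (n + 1) ω : ℝ) - (n + 1 : ℕ)|}
  have hsummable : Summable fun n : ℕ =>
      2 * Real.exp (-(1 / 4) * (((n + 1 : ℕ) : ℝ)) ^ (2 * β - 1)) :=
    ((summable_nat_add_iff 1).2
      (summable_exp_neg_mul_rpow (by norm_num) (by linarith))).mul_left 2
  have hsum : ∑' n, μ (B n) ≠ ⊤ := by
    refine ne_top_of_le_ne_top ?_ (ENNReal.tsum_le_tsum fun n =>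
      (hX (n + 1) n.succ_pos).measure_rpow_le_abs_sub_le (by simp) hβ1)
    rw [← ENNReal.ofReal_tsum_of_nonneg (fun n => by positivity) hsummable]
    exact ENNReal.ofReal_ne_top
  filter_upwards [ae_eventually_notMem hsum] with ω hω
  rw [← map_add_atTop_eq_nat 1, eventually_map]
  exact hω.mono fun n hn => (not_le.1 hn).le

end Poisson

theorem poisson_process_clt_vanishing_general
    {Ω : Type*} [MeasureSpace Ω]
    (P : ℝ → Ω → ℕ)
    (hmono : ∀ᵐ ω ∂ℙ, ∀ s t : ℝ, 0 ≤ s → s ≤ t → P s ω ≤ P t ω)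
    (hpois : ∀ t : ℝ, 0 < t → ∀ k : ℕ,
      ℙ {ω | P t ω = k} =
        ENNReal.ofReal (Real.exp (-t) * t ^ k / (Nat.factorial k)))
    (ε : ℝ) (hε : 0 < ε) :
    ∀ᵐ ω ∂ℙ, Tendsto (fun t : ℝ => ((P t ω : ℝ) - t) / t ^ ((1:ℝ)/2 + ε))
      atTop (𝓝 0) := by
  set β : ℝ := min (3 / 4) (1 / 2 + ε / 2)
  have hβ : 1 / 2 < β := lt_min (by norm_num) (by linarith)
  have hβ1 : β ≤ 1 := (min_le_left _ _).trans (by norm_num)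
  have hβε : β < 1 / 2 + ε := (min_le_right _ _).trans_lt (by linarith)
  have hinteger := ae_eventually_abs_sub_le_rpow (fun n => P n)
    (fun n hn => hpois n (Nat.cast_pos.2 hn)) hβ hβ1
  filter_upwards [hmono, hinteger] with ω hω hωn
  exact tendsto_sub_div_rpow_of_monotoneOn (f := fun t => (P t ω : ℝ))
    (fun s hs t _ hst => Nat.cast_le.2 (hω s t hs hst)) (by linarith) hβε hωn

/-- If `(P t, t ≥ 0)` is an ℕ-valued process with a.s. nondecreasing
paths such that `P t` is Poisson distributed with parameter `t` for every `t > 0`,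
then for every `ε > 0`, almost surely `(P t - t) / t ^ (1/2 + ε) → 0` as `t → ∞`. -/
theorem poisson_process_clt_vanishing
    {Ω : Type*} [MeasureSpace Ω] [IsProbabilityMeasure (ℙ : Measure Ω)]
    (P : ℝ → Ω → ℕ)
    (hmono : ∀ᵐ ω ∂ℙ, ∀ s t : ℝ, 0 ≤ s → s ≤ t → P s ω ≤ P t ω)
    (hpois : ∀ t : ℝ, 0 < t → ∀ k : ℕ,
      ℙ {ω | P t ω = k} =
        ENNReal.ofReal (Real.exp (-t) * t ^ k / (Nat.factorial k)))
    (ε : ℝ) (hε : 0 < ε) :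
    ∀ᵐ ω ∂ℙ, Tendsto (fun t : ℝ => ((P t ω : ℝ) - t) / t ^ ((1:ℝ)/2 + ε))
      atTop (𝓝 0) :=
  poisson_process_clt_vanishing_general P hmono hpois ε hε
end

section
/- Fix α ∈ (1,2). Let (D(r), r > 0) be a stochastic process with values in the natural numbers such that almost surely the map r ↦ D(r) is nonincreasing, and such that for every r > 0 the random variable D(r) has the Poisson distribution with parameter ((α−1)r)^{−1/(α−1)}. Then for every ε > 0, almost surely lim_{r → 0⁺} (D(r) − ((α−1)r)^{−1/(α−1)}) / r^{−1/(2(α−1))−ε} = 0. -/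
open MeasureTheory ProbabilityTheory Filter Set Topology

open Real
open scoped Nat

/-!
Reparametrising by the intensity `t = ((α - 1) r) ^ (-1/(α-1))` turns `D` into a nondecreasing
process `N` with `N t` Poisson of mean `t`, and the claim into `(N t - t) / t ^ (1/2 + δ) → 0` as
`t → ∞`, with `δ = ε (α - 1)`. A Chernoff bound gives
`ℙ(|N n - n| ≥ n ^ (1/2 + η)) ≤ 2 exp (-n ^ (2η) / 4)`, which is summable in `n`, so by
Borel–Cantelli `|N n - n| < n ^ (1/2 + η)` for all large integers `n`; monotonicity of `N`
interpolates between consecutive integers at the cost of an additive `1`.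
-/

-- Only the point masses are prescribed: `X` need not be measurable, so the bounds below go
-- through countable subadditivity rather than the law of `X`.
def PoissonDistributed {Ω : Type*} [MeasurableSpace Ω] (μ : Measure Ω) (X : Ω → ℕ) (lam : ℝ) :
    Prop :=
  ∀ k : ℕ, μ {ω | X ω = k} = ENNReal.ofReal (exp (-lam) * lam ^ k / k !)

section Chernoff

variable {Ω : Type*} [MeasurableSpace Ω] {μ : Measure Ω} {X : Ω → ℕ} {lam : ℝ}

lemma measure_preimage_le_tsum_mul {S : Set ℕ} {w : ℕ → ENNReal}
    (hw : ∀ k ∈ S, 1 ≤ w k) : μ (X ⁻¹' S) ≤ ∑' k, w k * μ {ω | X ω = k} := by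
  have hcover : X ⁻¹' S ⊆ ⋃ k ∈ S, {ω | X ω = k} := fun ω hω => mem_biUnion hω rfl
  calc μ (X ⁻¹' S) ≤ ∑' k, μ (⋃ _ : k ∈ S, {ω | X ω = k}) :=
        (measure_mono hcover).trans (measure_iUnion_le _)
    _ ≤ ∑' k, w k * μ {ω | X ω = k} := by
        refine ENNReal.tsum_le_tsum fun k => ?_
        by_cases hk : k ∈ S
        · simpa [hk] using mul_le_mul_left (hw k hk) (μ {ω | X ω = k})
        · simp [hk]

lemma Real.hasSum_exp_mul_poisson (lam t : ℝ) :
    HasSum (fun k : ℕ => exp (t * k) * (exp (-lam) * lam ^ k / k !))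
      (exp (lam * (exp t - 1))) := by
  have h := (NormedSpace.expSeries_div_hasSum_exp (lam * exp t)).mul_left (exp (-lam))
  rw [← Real.exp_eq_exp_ℝ, ← Real.exp_add] at h
  have hterm : (fun k : ℕ => exp (t * k) * (exp (-lam) * lam ^ k / k !)) =
      fun k => exp (-lam) * ((lam * exp t) ^ k / k !) := funext fun k => by
    rw [mul_pow, ← Real.exp_nat_mul, mul_comm (k : ℝ) t]
    ring
  rw [hterm, show lam * (exp t - 1) = -lam + lam * exp t by ring]
  exact h

/-- The exponential Markov inequality, weighting `k` by `exp (t * (k - a))`. -/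
lemma PoissonDistributed.measure_preimage_le_exp (hX : PoissonDistributed μ X lam) (hlam : 0 ≤ lam)
    {S : Set ℕ} {t a : ℝ} (hS : ∀ k ∈ S, t * a ≤ t * k) :
    μ (X ⁻¹' S) ≤ ENNReal.ofReal (exp (lam * (exp t - 1) - t * a)) := by
  have hsum := (Real.hasSum_exp_mul_poisson lam t).mul_left (exp (-(t * a)))
  calc μ (X ⁻¹' S)
      ≤ ∑' k : ℕ, ENNReal.ofReal (exp (t * k - t * a)) * μ {ω | X ω = k} :=
        measure_preimage_le_tsum_mul fun k hk => by
          simpa using sub_nonneg.2 (hS k hk)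
    _ = ENNReal.ofReal
          (∑' k : ℕ, exp (-(t * a)) * (exp (t * k) * (exp (-lam) * lam ^ k / k !))) := by
        rw [ENNReal.ofReal_tsum_of_nonneg (fun k => by positivity) hsum.summable]
        refine tsum_congr fun k => ?_
        rw [hX k, ← ENNReal.ofReal_mul (exp_pos _).le, sub_eq_neg_add, exp_add, mul_assoc]
    _ = ENNReal.ofReal (exp (lam * (exp t - 1) - t * a)) := by
        rw [hsum.tsum_eq, ← exp_add]
        ring_nf

lemma PoissonDistributed.measure_le_abs_sub (hX : PoissonDistributed μ X lam) (hlam : 0 < lam)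
    {x : ℝ} (hx₀ : 0 ≤ x) (hx : x ≤ 2 * lam) :
    μ {ω | x ≤ |(X ω : ℝ) - lam|} ≤ ENNReal.ofReal (2 * exp (-(x ^ 2 / (4 * lam)))) := by
  set t := x / (2 * lam)
  have ht₀ : 0 ≤ t := by positivity
  have ht₁ : t ≤ 1 := (div_le_one (by positivity)).2 hx
  -- with `t = x / (2 lam)` both Chernoff exponents are at most `lam t² - t x = -x² / (4 lam)`
  have hquad : lam * t ^ 2 - t * x = -(x ^ 2 / (4 * lam)) := by
    simp only [t]
    field_simp
    ring
  have hexp : ∀ s : ℝ, |s| = t → lam * (exp s - 1 - s) ≤ lam * t ^ 2 := fun s hs => by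
    have := (abs_le.1 (abs_exp_sub_one_sub_id_le (hs.trans_le ht₁))).2
    rw [← sq_abs, hs] at this
    exact mul_le_mul_of_nonneg_left this hlam.le
  have hupper : μ (X ⁻¹' {k | lam + x ≤ k}) ≤ ENNReal.ofReal (exp (-(x ^ 2 / (4 * lam)))) := by
    refine (hX.measure_preimage_le_exp hlam.le fun k hk => mul_le_mul_of_nonneg_left hk ht₀).trans
      (ENNReal.ofReal_le_ofReal (exp_le_exp.2 ?_))
    have := hexp t (abs_of_nonneg ht₀)
    linarith
  have hlower : μ (X ⁻¹' {k | (k : ℝ) ≤ lam - x}) ≤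
      ENNReal.ofReal (exp (-(x ^ 2 / (4 * lam)))) := by
    refine (hX.measure_preimage_le_exp (t := -t) hlam.le fun k hk => by
        simpa using mul_le_mul_of_nonneg_left hk ht₀).trans
      (ENNReal.ofReal_le_ofReal (exp_le_exp.2 ?_))
    have := hexp (-t) (by rw [abs_neg, abs_of_nonneg ht₀])
    linarith
  have hsplit : {ω | x ≤ |(X ω : ℝ) - lam|} ⊆
      X ⁻¹' {k | lam + x ≤ k} ∪ X ⁻¹' {k | (k : ℝ) ≤ lam - x} := fun ω hω => by
    rcases le_abs'.1 (show x ≤ |(X ω : ℝ) - lam| from hω) with h | h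
    · exact Or.inr (show (X ω : ℝ) ≤ lam - x by linarith)
    · exact Or.inl (show lam + x ≤ X ω by linarith)
  calc μ {ω | x ≤ |(X ω : ℝ) - lam|}
      ≤ μ (X ⁻¹' {k | lam + x ≤ k}) + μ (X ⁻¹' {k | (k : ℝ) ≤ lam - x}) :=
        (measure_mono hsplit).trans (measure_union_le _ _)
    _ ≤ ENNReal.ofReal (exp (-(x ^ 2 / (4 * lam)))) + ENNReal.ofReal (exp (-(x ^ 2 / (4 * lam)))) :=
        add_le_add hupper hlower
    _ = ENNReal.ofReal (2 * exp (-(x ^ 2 / (4 * lam)))) := by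
        rw [← ENNReal.ofReal_add (exp_pos _).le (exp_pos _).le, two_mul]

end Chernoff

lemma Real.summable_exp_neg_mul_rpow {c s : ℝ} (hc : 0 < c) (hs : 0 < s) :
    Summable fun n : ℕ => exp (-(c * (n : ℝ) ^ s)) := by
  have hpow : Tendsto (fun n : ℕ => (n : ℝ) ^ s) atTop atTop :=
    (tendsto_rpow_atTop hs).comp tendsto_natCast_atTop_atTop
  have hO : (fun n : ℕ => exp (-(c * (n : ℝ) ^ s))) =O[atTop] fun n : ℕ => (n : ℝ) ^ (-2 : ℝ) := by
    refine ((isLittleO_exp_neg_mul_rpow_atTop hc (-2 / s)).comp_tendsto hpow).isBigO.congr'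
      (Eventually.of_forall fun n => by simp) ?_
    filter_upwards with n
    simp only [Function.comp_apply]
    rw [← rpow_mul (Nat.cast_nonneg n)]
    congr 1
    field_simp
  exact summable_of_isBigO_nat (summable_nat_rpow.2 (by norm_num)) hO

lemma eventually_abs_sub_le_of_monotoneOn {f g : ℝ → ℝ} (hf : MonotoneOn f (Ioi 0))
    (hg : MonotoneOn g (Ioi 0)) (h : ∀ᶠ n : ℕ in atTop, |f n - n| ≤ g n) :
    ∀ᶠ t in atTop, |f t - t| ≤ g (t + 1) + 1 := by
  obtain ⟨N, hN⟩ := eventually_atTop.1 h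
  filter_upwards [eventually_ge_atTop ((N : ℝ) + 1)] with t ht
  set n := ⌊t⌋₊
  have hNn : N + 1 ≤ n := Nat.le_floor (by exact_mod_cast ht)
  have hn₀ : (0 : ℝ) < n := by exact_mod_cast (Nat.succ_pos N).trans_le hNn
  have hnt : (n : ℝ) ≤ t := Nat.floor_le (by linarith [(N.cast_nonneg : (0 : ℝ) ≤ N)])
  have htn : t < n + 1 := Nat.lt_floor_add_one t
  have hlo : f n ≤ f t := hf hn₀ (hn₀.trans_le hnt) hnt
  have hhi : f t ≤ f (n + 1) := hf (hn₀.trans_le hnt) (mem_Ioi.2 (by positivity)) htn.le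
  have hgn : g n ≤ g (t + 1) := hg hn₀ (mem_Ioi.2 (by linarith)) (by linarith)
  have hgn₁ : g (n + 1) ≤ g (t + 1) :=
    hg (mem_Ioi.2 (by positivity)) (mem_Ioi.2 (by linarith)) (by linarith)
  have hdev := abs_le.1 (hN n (by omega))
  have hdev₁ := abs_le.1 (hN (n + 1) (by omega))
  push_cast at hdev₁
  rw [abs_le]
  constructor <;> linarith

lemma add_one_rpow_add_one_le {a t : ℝ} (ha : 0 ≤ a) (ht : 1 ≤ t) :
    (t + 1) ^ a + 1 ≤ (2 ^ a + 1) * t ^ a := by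
  have h2t : (t + 1) ^ a ≤ 2 ^ a * t ^ a := by
    rw [← mul_rpow zero_le_two (by linarith)]
    exact rpow_le_rpow (by linarith) (by linarith) ha
  have h1 : 1 ≤ t ^ a := one_le_rpow ht ha
  linarith

section BorelCantelli

variable {Ω : Type*} [MeasurableSpace Ω] {μ : Measure Ω}

lemma ae_eventually_abs_sub_lt_rpow {X : ℕ → Ω → ℕ}
    (hX : ∀ n : ℕ, 0 < n → PoissonDistributed μ (X n) n) {η : ℝ} (hη₀ : 0 < η) (hη : η ≤ 1 / 2) :
    ∀ᵐ ω ∂μ, ∀ᶠ n : ℕ in atTop, |(X n ω : ℝ) - n| < (n : ℝ) ^ (1 / 2 + η) := by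
  set p : ℕ → Ω → Prop := fun n ω => 0 < n ∧ (n : ℝ) ^ (1 / 2 + η) ≤ |(X n ω : ℝ) - n|
  have hbound : ∀ n : ℕ,
      μ {ω | p n ω} ≤ ENNReal.ofReal (2 * exp (-(1 / 4 * (n : ℝ) ^ (2 * η)))) := by
    intro n
    rcases Nat.eq_zero_or_pos n with rfl | hn
    · simp [p]
    have hn' : (1 : ℝ) ≤ n := by exact_mod_cast hn
    have hx : (n : ℝ) ^ (1 / 2 + η) ≤ 2 * n := by
      have := rpow_le_rpow_of_exponent_le hn' (show 1 / 2 + η ≤ 1 by linarith)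
      rw [rpow_one] at this
      linarith
    refine (measure_mono fun ω hω => hω.2).trans
      (((hX n hn).measure_le_abs_sub (by positivity) (by positivity) hx).trans_eq ?_)
    rw [← rpow_natCast, ← rpow_mul (by positivity), show (1 / 2 + η) * ((2 : ℕ) : ℝ) = 1 + 2 * η by
      push_cast; ring, rpow_add (by positivity), rpow_one]
    field_simp
  have hsum : ∑' n, μ {ω | p n ω} ≠ ⊤ := by
    refine ne_top_of_le_ne_top ?_ (ENNReal.tsum_le_tsum hbound)
    rw [← ENNReal.ofReal_tsum_of_nonneg (fun n => by positivity)
      ((Real.summable_exp_neg_mul_rpow (by norm_num) (by positivity)).mul_left 2)]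
    exact ENNReal.ofReal_ne_top
  have hfin : ∀ᵐ ω ∂μ, ∀ᶠ n in atTop, ¬ p n ω := by
    rw [ae_iff]
    simpa only [not_eventually, not_not] using measure_setOfPred_frequently_eq_zero hsum
  filter_upwards [hfin] with ω hω
  filter_upwards [hω, eventually_gt_atTop 0] with n hn hn₀
  exact lt_of_not_ge fun h => hn ⟨hn₀, h⟩

theorem ae_tendsto_sub_div_rpow_of_poissonDistributed {N : ℝ → Ω → ℕ}
    (hmono : ∀ᵐ ω ∂μ, ∀ s t : ℝ, 0 < s → s ≤ t → N s ω ≤ N t ω)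
    (hN : ∀ t : ℝ, 0 < t → PoissonDistributed μ (N t) t) {δ : ℝ} (hδ : 0 < δ) :
    ∀ᵐ ω ∂μ, Tendsto (fun t => ((N t ω : ℝ) - t) / t ^ (1 / 2 + δ)) atTop (𝓝 0) := by
  set η := min (δ / 2) (1 / 2)
  have hη₀ : 0 < η := lt_min (by positivity) (by norm_num)
  have hηδ : η < δ := (min_le_left _ _).trans_lt (by linarith)
  set a := 1 / 2 + η
  have ha : 0 ≤ a := by positivity
  have hBC := ae_eventually_abs_sub_lt_rpow (X := fun n => N n)
    (fun n hn => hN n (by exact_mod_cast hn)) hη₀ (min_le_right _ _)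
  filter_upwards [hmono, hBC] with ω hmonoω hBCω
  have hsandwich := eventually_abs_sub_le_of_monotoneOn (f := fun t => (N t ω : ℝ))
    (g := fun s => s ^ a) (fun s hs t _ hst => Nat.cast_le.2 (hmonoω s t hs hst))
    (fun s hs t _ hst => rpow_le_rpow (le_of_lt hs) hst ha) (hBCω.mono fun n hn => hn.le)
  have hdecay : Tendsto (fun t : ℝ => (2 ^ a + 1) * t ^ (-(δ - η))) atTop (𝓝 0) := by
    simpa using (tendsto_rpow_neg_atTop (sub_pos.2 hηδ)).const_mul (2 ^ a + 1)
  refine squeeze_zero_norm' ?_ hdecay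
  filter_upwards [hsandwich, eventually_ge_atTop 1] with t ht ht₁
  have ht₀ : 0 < t := by linarith
  rw [norm_div, Real.norm_eq_abs, Real.norm_of_nonneg (by positivity), div_le_iff₀ (by positivity),
    mul_assoc, ← rpow_add ht₀, show -(δ - η) + (1 / 2 + δ) = a by ring]
  exact ht.trans (add_one_rpow_add_one_le ha ht₁)

end BorelCantelli

section Intensity

variable {c : ℝ}

lemma mul_rpow_div_rpow_neg_inv (hc : 0 < c) {t : ℝ} (ht : 0 < t) :
    (c * (t ^ (-c) / c)) ^ (-(1 / c)) = t := by
  rw [mul_div_cancel₀ _ hc.ne', ← rpow_mul ht.le, neg_mul_neg, mul_one_div_cancel hc.ne', rpow_one]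

lemma rpow_neg_inv_rpow_neg_div (hc : 0 < c) {r : ℝ} (hr : 0 < r) :
    ((c * r) ^ (-(1 / c))) ^ (-c) / c = r := by
  rw [← rpow_mul (by positivity), neg_mul_neg, one_div_mul_cancel hc.ne', rpow_one,
    mul_div_cancel_left₀ _ hc.ne']

lemma tendsto_mul_rpow_neg_inv_nhdsGT_zero (hc : 0 < c) :
    Tendsto (fun r => (c * r) ^ (-(1 / c))) (𝓝[>] 0) atTop := by
  have hscale : Tendsto (fun r : ℝ => c * r) (𝓝[>] 0) (𝓝[>] 0) :=
    tendsto_nhdsWithin_iff.2 ⟨by simpa using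
        ((tendsto_id (x := 𝓝 (0 : ℝ))).const_mul c).mono_left nhdsWithin_le_nhds,
      eventually_nhdsWithin_of_forall fun r hr => mul_pos hc hr⟩
  exact (tendsto_rpow_neg_nhdsGT_zero (by simpa using hc)).comp hscale

lemma mul_rpow_neg_inv_rpow_half_add (hc : 0 < c) {r : ℝ} (hr : 0 < r) (ε : ℝ) :
    ((c * r) ^ (-(1 / c))) ^ (1 / 2 + ε * c) =
      (c ^ (1 / (2 * c) + ε))⁻¹ * r ^ (-(1 / (2 * c)) - ε) := by
  rw [← rpow_mul (by positivity), mul_rpow hc.le hr.le, ← rpow_neg hc.le]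
  congr 2 <;> field_simp; ring

end Intensity

theorem poisson_blocks_clt_vanishing_general
    {Ω : Type*} [MeasureSpace Ω]
    (α : ℝ) (hα : α ∈ Ioo (1:ℝ) 2)
    (D : ℝ → Ω → ℕ)
    (hmono : ∀ᵐ ω ∂ℙ, ∀ r s : ℝ, 0 < r → r ≤ s → D s ω ≤ D r ω)
    (hpois : ∀ r : ℝ, 0 < r → ∀ k : ℕ,
      ℙ {ω | D r ω = k} =
        ENNReal.ofReal (Real.exp (-(((α - 1) * r) ^ (-(1/(α - 1))))) *
          (((α - 1) * r) ^ (-(1/(α - 1)))) ^ k / (Nat.factorial k)))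
    (ε : ℝ) (hε : 0 < ε) :
    ∀ᵐ ω ∂ℙ, Tendsto
      (fun r : ℝ => ((D r ω : ℝ) - ((α - 1) * r) ^ (-(1/(α - 1)))) /
        r ^ (-(1/(2*(α - 1))) - ε))
      (𝓝[>] 0) (𝓝 0) := by
  have hα₀ : 0 < α - 1 := sub_pos.2 hα.1
  -- reparametrise by the intensity `t = ((α - 1) r) ^ (-1/(α-1))`, i.e. `r = ρ t`
  set ρ : ℝ → ℝ := fun t => t ^ (-(α - 1)) / (α - 1)
  have hρpos : ∀ t, 0 < t → 0 < ρ t := fun t ht => by positivity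
  have hρanti : ∀ s t, 0 < s → s ≤ t → ρ t ≤ ρ s := fun s t hs hst =>
    div_le_div_of_nonneg_right (rpow_le_rpow_of_nonpos hs hst (by linarith)) hα₀.le
  have hlim := ae_tendsto_sub_div_rpow_of_poissonDistributed (N := fun t => D (ρ t))
    (hmono.mono fun ω h s t hs hst => h _ _ (hρpos t (hs.trans_le hst)) (hρanti s t hs hst))
    (fun t ht k => by
      simpa only [ρ, mul_rpow_div_rpow_neg_inv hα₀ ht] using hpois (ρ t) (hρpos t ht) k)
    (δ := ε * (α - 1)) (by positivity)
  filter_upwards [hlim] with ω hω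
  have hmul := ((hω.comp (tendsto_mul_rpow_neg_inv_nhdsGT_zero hα₀)).const_mul
    ((α - 1) ^ (1 / (2 * (α - 1)) + ε))⁻¹)
  rw [mul_zero] at hmul
  refine hmul.congr' (eventually_nhdsWithin_of_forall fun r (hr : 0 < r) => ?_)
  simp only [Function.comp_apply, ρ, rpow_neg_inv_rpow_neg_div hα₀ hr,
    mul_rpow_neg_inv_rpow_half_add hα₀ hr]
  field_simp

/-- Fix `α ∈ (1,2)`. If `(D r, r > 0)` is an ℕ-valued process with a.s.
nonincreasing paths such that `D r` is Poisson distributed with parameter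
`((α-1) r) ^ (-1/(α-1))` for every `r > 0`, then for every `ε > 0`, almost surely
`(D r - ((α-1) r) ^ (-1/(α-1))) / r ^ (-1/(2(α-1)) - ε) → 0` as `r → 0⁺`. -/
theorem poisson_blocks_clt_vanishing
    {Ω : Type*} [MeasureSpace Ω] [IsProbabilityMeasure (ℙ : Measure Ω)]
    (α : ℝ) (hα : α ∈ Ioo (1:ℝ) 2)
    (D : ℝ → Ω → ℕ)
    (hmono : ∀ᵐ ω ∂ℙ, ∀ r s : ℝ, 0 < r → r ≤ s → D s ω ≤ D r ω)
    (hpois : ∀ r : ℝ, 0 < r → ∀ k : ℕ,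
      ℙ {ω | D r ω = k} =
        ENNReal.ofReal (Real.exp (-(((α - 1) * r) ^ (-(1/(α - 1))))) *
          (((α - 1) * r) ^ (-(1/(α - 1)))) ^ k / (Nat.factorial k)))
    (ε : ℝ) (hε : 0 < ε) :
    ∀ᵐ ω ∂ℙ, Tendsto
      (fun r : ℝ => ((D r ω : ℝ) - ((α - 1) * r) ^ (-(1/(α - 1)))) /
        r ^ (-(1/(2*(α - 1))) - ε))
      (𝓝[>] 0) (𝓝 0) :=
  poisson_blocks_clt_vanishing_general α hα D hmono hpois ε hε
end

section
/- Fix α ∈ (1,2). Let Y₀ : [0,∞) × Ω → ℝ be a jointly measurable stochastic process such that Y₀(0) = 0 almost surely, almost every sample path t ↦ Y₀(t) is càdlàg, Y₀ has independent increments (for any 0 ≤ t₀ < t₁ < … < t_n the increments Y₀(t₁) − Y₀(t₀), …, Y₀(t_n) − Y₀(t_{n−1}) are independent), and for all 0 ≤ s ≤ t and all λ ≥ 0, E[exp(−λ(Y₀(t) − Y₀(s)))] = exp((t−s) λ^{α}). Set X = ∫₀¹ Y₀(s) ds. Then for every λ ≥ 0, E[exp(−λ X)] = exp(λ^{α}/(α+1)).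 -/
/-!
Let `R_n = n⁻¹ ∑_{k<n} Y₀((k+1)/n)` be the right Riemann sums of the path. Since the paths are
càdlàg, hence bounded and right-continuous on `[0,1]`, `R_n → ∫₀¹ Y₀` almost surely. Abel
summation and `Y₀ 0 = 0` give `R_n = ∑_{i<n} (1 - i/n) (Y₀((i+1)/n) - Y₀(i/n))`, a weighted sum
of independent increments, so `E[exp(-λ R_n)] = exp(λ^α n⁻¹ ∑_{k<n} ((k+1)/n)^α)`, a Riemann sum
converging to `exp(λ^α ∫₀¹ s^α ds) = exp(λ^α/(α+1))`. The same formula at `2λ` bounds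
`exp(-λ R_n)` in `L²`, so the family is uniformly integrable and Vitali's convergence theorem
identifies the limit with `E[exp(-λ X)]`.
-/

open MeasureTheory ProbabilityTheory Filter Set Topology

/-- A function on `[0,∞)` is càdlàg: right-continuous at every `t ≥ 0`, with left
limits at every `t > 0`. -/
def CadlagOn (f : ℝ → ℝ) : Prop :=
  (∀ t : ℝ, 0 ≤ t → Filter.Tendsto f (𝓝[Set.Ici t] t) (𝓝 (f t))) ∧
  (∀ t : ℝ, 0 < t → ∃ l : ℝ, Filter.Tendsto f (𝓝[Set.Ico 0 t] t) (𝓝 l))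

open scoped ENNReal

namespace MeasureTheory

variable {Ω E : Type*} [MeasurableSpace Ω] {μ : Measure Ω} [NormedAddCommGroup E]

theorem unifIntegrable_of_eLpNorm_le {ι : Type*} {p q : ℝ≥0∞} (hp : p ≠ 0) (hpq : p < q)
    {f : ι → Ω → E} (hf : ∀ i, AEStronglyMeasurable (f i) μ) {C : ℝ≥0∞} (hC : C ≠ ∞)
    (hbound : ∀ i, eLpNorm (f i) q μ ≤ C) : UnifIntegrable f p μ := by
  set r := 1 / p.toReal - 1 / q.toReal
  have hr : 0 < r := by
    have hp' : 0 < p.toReal := ENNReal.toReal_pos hp (hpq.trans_le le_top).ne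
    rcases eq_or_ne q ∞ with rfl | hq
    · simpa [r] using hp'
    · simpa [r] using one_div_lt_one_div_of_lt hp'
        ((ENNReal.toReal_lt_toReal (hpq.trans_le le_top).ne hq).2 hpq)
  intro ε hε
  have hsmall : Tendsto (fun δ : ℝ => C * ENNReal.ofReal δ ^ r) (𝓝[>] 0) (𝓝 0) := by
    have := ENNReal.Tendsto.const_mul
      ((ENNReal.continuous_rpow_const (y := r)).comp ENNReal.continuous_ofReal |>.tendsto 0)
      (Or.inr hC)
    simpa [ENNReal.zero_rpow_of_pos hr] using this.mono_left nhdsWithin_le_nhds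
  obtain ⟨δ, hδε, hδ⟩ := ((hsmall.eventually (gt_mem_nhds (ENNReal.ofReal_pos.2 hε))).and
    self_mem_nhdsWithin).exists
  refine ⟨δ, hδ, fun i s hs hμs => ?_⟩
  calc eLpNorm (s.indicator (f i)) p μ = eLpNorm (f i) p (μ.restrict s) :=
        eLpNorm_indicator_eq_eLpNorm_restrict hs
    _ ≤ eLpNorm (f i) q (μ.restrict s) * μ.restrict s univ ^ r :=
        eLpNorm_le_eLpNorm_mul_rpow_measure_univ hpq.le (hf i).restrict
    _ ≤ C * ENNReal.ofReal δ ^ r := by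
        rw [Measure.restrict_apply_univ]
        gcongr
        exact (eLpNorm_mono_measure _ Measure.restrict_le_self).trans (hbound i)
    _ ≤ ENNReal.ofReal ε := hδε.le

theorem tendsto_integral_of_tendsto_ae_of_eLpNorm_le [NormedSpace ℝ E] [IsFiniteMeasure μ]
    {p : ℝ≥0∞} (hp : 1 < p) {f : ℕ → Ω → E} {g : Ω → E} (hf : ∀ n, AEStronglyMeasurable (f n) μ)
    {C : ℝ≥0∞} (hC : C ≠ ∞) (hbound : ∀ n, eLpNorm (f n) p μ ≤ C)
    (hfg : ∀ᵐ x ∂μ, Tendsto (fun n => f n x) atTop (𝓝 (g x))) :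
    Tendsto (fun n => ∫ x, f n x ∂μ) atTop (𝓝 (∫ x, g x ∂μ)) := by
  have hg : AEStronglyMeasurable g μ := aestronglyMeasurable_of_tendsto_ae atTop hf hfg
  have hgp : MemLp g p μ :=
    ⟨hg, (Lp.eLpNorm_le_of_ae_tendsto (.of_forall hbound) hf hfg).trans_lt hC.lt_top⟩
  have hfp : ∀ n, MemLp (f n) p μ := fun n => ⟨hf n, (hbound n).trans_lt hC.lt_top⟩
  refine tendsto_integral_of_L1' g hg (.of_forall fun n => memLp_one_iff_integrable.1
    ((hfp n).mono_exponent hp.le)) ?_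
  exact tendsto_Lp_finite_of_tendsto_ae le_rfl ENNReal.one_ne_top hf (hgp.mono_exponent hp.le)
    (unifIntegrable_of_eLpNorm_le one_ne_zero hp hf hC hbound) hfg

theorem eLpNorm_exp_neg_mul_two {X : Ω → ℝ} (hX : AEStronglyMeasurable X μ) (c : ℝ)
    (h : Integrable (fun ω => Real.exp (-(2 * c) * X ω)) μ) :
    eLpNorm (fun ω => Real.exp (-c * X ω)) 2 μ =
      ENNReal.ofReal √(∫ ω, Real.exp (-(2 * c) * X ω) ∂μ) := by
  have hsq : ∀ ω, ‖Real.exp (-c * X ω)‖ ^ (2 : ℝ) = Real.exp (-(2 * c) * X ω) := fun ω => by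
    rw [Real.norm_of_nonneg (Real.exp_nonneg _), ← Real.exp_mul]
    ring_nf
  have hmem : MemLp (fun ω => Real.exp (-c * X ω)) 2 μ := by
    refine (memLp_two_iff_integrable_sq (by fun_prop)).2 (h.congr (.of_forall fun ω => ?_))
    simpa [Real.rpow_two] using (hsq ω).symm
  rw [hmem.eLpNorm_eq_integral_rpow_norm two_ne_zero ENNReal.ofNat_ne_top]
  simp only [ENNReal.toReal_ofNat, hsq, Real.sqrt_eq_rpow, one_div]

end MeasureTheory

theorem ProbabilityTheory.iIndepFun.integral_exp_sum_mul {Ω ι : Type*} [MeasurableSpace Ω]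
    {μ : Measure Ω} [Fintype ι] {X : ι → Ω → ℝ} (h : iIndepFun X μ) (hX : ∀ i, Measurable (X i))
    (c : ι → ℝ) :
    ∫ ω, Real.exp (∑ i, c i * X i ω) ∂μ = ∏ i, ∫ ω, Real.exp (c i * X i ω) ∂μ := by
  have := (h.comp (fun i x => c i * x) fun i => measurable_const_mul (c i)).mgf_sum
    (fun i => (hX i).const_mul (c i)) Finset.univ (t := 1)
  simpa [mgf, Finset.sum_apply] using this

theorem Finset.sum_range_natCast_sub_mul_sub (g : ℕ → ℝ) (n m : ℕ) :
    ∑ i ∈ range m, ((n : ℝ) - i) * (g (i + 1) - g i) =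
      ((n : ℝ) - m) * g m - n * g 0 + ∑ i ∈ range m, g (i + 1) := by
  induction m with
  | zero => simp
  | succ m ih =>
    rw [sum_range_succ, ih, sum_range_succ]
    push_cast
    ring

noncomputable def rightRiemannSum (f : ℝ → ℝ) (n : ℕ) : ℝ :=
  (n : ℝ)⁻¹ * ∑ k ∈ Finset.range n, f ((k + 1) / n)

theorem rightRiemannSum_eq_sum_natCast_sub_div (f : ℝ → ℝ) (n : ℕ) :
    rightRiemannSum f n = (n : ℝ)⁻¹ * ∑ i : Fin n, f ((n - i) / n) := by
  rw [rightRiemannSum, Fin.sum_univ_eq_sum_range (fun i => f ((n - i) / n)),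
    ← Finset.sum_range_reflect]
  refine congrArg _ (Finset.sum_congr rfl fun j hj => ?_)
  have hj' := Finset.mem_range.1 hj
  rw [show n - 1 - j = n - (j + 1) by omega, Nat.cast_sub hj']
  push_cast
  ring_nf

theorem rightRiemannSum_eq_sum_mul_sub {f : ℝ → ℝ} (hf : f 0 = 0) (n : ℕ) :
    rightRiemannSum f n = ∑ i : Fin n, ((n : ℝ) - i) / n * (f ((i + 1) / n) - f (i / n)) := by
  have := Finset.sum_range_natCast_sub_mul_sub (fun k => f (k / n)) n n
  simp only [sub_self, zero_mul, Nat.cast_zero, zero_div, hf, mul_zero, zero_add,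
    Nat.cast_add, Nat.cast_one] at this
  rw [rightRiemannSum, ← this, Fin.sum_univ_eq_sum_range
    (fun i => ((n : ℝ) - i) / n * (f ((i + 1) / n) - f (i / n))), Finset.mul_sum]
  exact Finset.sum_congr rfl fun i _ => by ring

theorem integral_comp_natCeil_mul_div (f : ℝ → ℝ) {n : ℕ} (hn : n ≠ 0) :
    ∫ s in (0 : ℝ)..1, f (⌈n * s⌉₊ / n) = rightRiemannSum f n := by
  have hn' : (0 : ℝ) < n := by positivity
  have hle : ∀ k : ℕ, (k : ℝ) / n ≤ (k + 1) / n := fun k => by gcongr; linarith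
  have hstep : ∀ k : ℕ, EqOn (fun s : ℝ => f (⌈n * s⌉₊ / n)) (fun _ => f ((k + 1) / n))
      (Ioc ((k : ℝ) / n) ((k + 1) / n)) := by
    intro k s ⟨hks, hsk⟩
    rw [div_lt_iff₀' hn'] at hks
    rw [le_div_iff₀' hn'] at hsk
    have : ⌈n * s⌉₊ = k + 1 := by
      rw [Nat.ceil_eq_iff k.succ_ne_zero]
      push_cast
      constructor <;> linarith
    simp [this]
  have hpiece : ∀ k : ℕ, ∫ s in (k / n : ℝ)..(k + 1) / n, f (⌈n * s⌉₊ / n) =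
      (n : ℝ)⁻¹ * f ((k + 1) / n) := by
    intro k
    rw [intervalIntegral.integral_of_le (hle k), setIntegral_congr_fun measurableSet_Ioc (hstep k),
      setIntegral_const, Real.volume_real_Ioc_of_le (hle k), smul_eq_mul]
    congr 1
    field_simp
    ring
  have hint : ∀ k < n, IntervalIntegrable (fun s => f (⌈n * s⌉₊ / n)) volume
      ((k : ℕ) / n : ℝ) (((k + 1 : ℕ) : ℝ) / n) := by
    intro k _
    rw [intervalIntegrable_iff_integrableOn_Ioc_of_le (by push_cast; exact hle k)]
    exact (integrableOn_const measure_Ioc_lt_top.ne (C := f ((k + 1) / n))).congr_fun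
      (fun s hs => (hstep k (by push_cast at hs; exact hs)).symm) measurableSet_Ioc
  have hsum := intervalIntegral.sum_integral_adjacent_intervals hint
  push_cast at hsum
  rw [zero_div, div_self hn'.ne'] at hsum
  rw [← hsum, rightRiemannSum, Finset.mul_sum]
  exact Finset.sum_congr rfl fun k _ => hpiece k

theorem natCeil_mul_div_mem_Icc (n : ℕ) {s : ℝ} (hs : s ∈ Icc (0 : ℝ) 1) :
    (⌈n * s⌉₊ : ℝ) / n ∈ Icc (0 : ℝ) 1 := by
  refine ⟨by positivity, div_le_one_of_le₀ ?_ n.cast_nonneg⟩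
  exact_mod_cast Nat.ceil_le.2 (mul_le_of_le_one_right n.cast_nonneg hs.2)

theorem tendsto_natCeil_mul_div_nhdsGE {s : ℝ} (hs : 0 ≤ s) :
    Tendsto (fun n : ℕ => (⌈n * s⌉₊ : ℝ) / n) atTop (𝓝[≥] s) := by
  refine tendsto_nhdsWithin_iff.2 ⟨?_, (eventually_gt_atTop 0).mono fun n hn => ?_⟩
  · simpa only [mul_comm s, Function.comp_def] using
      (tendsto_nat_ceil_mul_div_atTop hs).comp tendsto_natCast_atTop_atTop
  · rw [mem_Ici, le_div_iff₀ (by positivity), mul_comm]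
    exact Nat.le_ceil _

theorem tendsto_rightRiemannSum {f : ℝ → ℝ} (hfm : Measurable f) {M : ℝ}
    (hM : ∀ t ∈ Icc (0 : ℝ) 1, |f t| ≤ M)
    (hf : ∀ t ∈ Ioc (0 : ℝ) 1, ContinuousWithinAt f (Ici t) t) :
    Tendsto (rightRiemannSum f) atTop (𝓝 (∫ s in (0 : ℝ)..1, f s)) := by
  have hlim : Tendsto (fun n : ℕ => ∫ s in Ioc (0 : ℝ) 1, f (⌈n * s⌉₊ / n)) atTop
      (𝓝 (∫ s in Ioc (0 : ℝ) 1, f s)) := by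
    refine tendsto_integral_of_dominated_convergence (fun _ => M) (fun n => ?_)
      (integrableOn_const measure_Ioc_lt_top.ne) (fun n => ?_) ?_
    · exact (hfm.comp (by fun_prop)).aestronglyMeasurable
    · refine (ae_restrict_iff' measurableSet_Ioc).2 (.of_forall fun s hs => ?_)
      exact hM _ (natCeil_mul_div_mem_Icc n (Ioc_subset_Icc_self hs))
    · refine (ae_restrict_iff' measurableSet_Ioc).2 (.of_forall fun s hs => ?_)
      exact (hf s hs).tendsto.comp (tendsto_natCeil_mul_div_nhdsGE hs.1.le)
  rw [intervalIntegral.integral_of_le zero_le_one]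
  refine hlim.congr' ((eventually_ne_atTop 0).mono fun n hn => ?_)
  rw [← intervalIntegral.integral_of_le zero_le_one, integral_comp_natCeil_mul_div f hn]

theorem tendsto_rightRiemannSum_rpow {α : ℝ} (hα : 0 ≤ α) :
    Tendsto (rightRiemannSum (· ^ α)) atTop (𝓝 (1 / (α + 1))) := by
  have hcont := Real.continuous_rpow_const hα
  have hbound : ∀ t ∈ Icc (0 : ℝ) 1, |t ^ α| ≤ 1 := fun t ht => by
    rw [abs_of_nonneg (Real.rpow_nonneg ht.1 α)]
    exact Real.rpow_le_one ht.1 ht.2 hα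
  convert tendsto_rightRiemannSum hcont.measurable hbound
    (fun t _ => hcont.continuousAt.continuousWithinAt) using 2
  rw [integral_rpow (Or.inl (by linarith)), Real.one_rpow, Real.zero_rpow (by linarith)]
  ring

theorem CadlagOn.exists_abs_le {f : ℝ → ℝ} (hf : CadlagOn f) (b : ℝ) :
    ∃ M, ∀ t ∈ Icc 0 b, |f t| ≤ M := by
  refine isCompact_Icc.induction_on (p := fun s => ∃ M, ∀ t ∈ s, |f t| ≤ M) ⟨0, by simp⟩
    (fun s u hsu ⟨M, hM⟩ => ⟨M, fun t ht => hM t (hsu ht)⟩)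
    (fun s u ⟨M, hM⟩ ⟨N, hN⟩ => ⟨max M N, fun t ht => ht.elim
      (fun hs => (hM t hs).trans (le_max_left _ _)) (fun hu => (hN t hu).trans (le_max_right _ _))⟩)
    fun x hx => ?_
  obtain ⟨M, hM⟩ := (hf.1 x hx.1).abs.isBoundedUnder_le
  obtain ⟨N, hN⟩ : ∃ N, ∀ᶠ t in 𝓝[Ico 0 x] x, |f t| ≤ N := by
    rcases hx.1.eq_or_lt with rfl | hx0
    · exact ⟨0, by simp⟩
    · obtain ⟨l, hl⟩ := hf.2 x hx0
      exact hl.abs.isBoundedUnder_le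
  have hcover : 𝓝[Icc 0 b] x ≤ 𝓝[Ico 0 x] x ⊔ 𝓝[Ici x] x := by
    rw [← nhdsWithin_union]
    exact nhdsWithin_mono _ fun t ht => (lt_or_ge t x).imp (fun h => ⟨ht.1, h⟩) id
  refine ⟨_, hcover (eventually_sup.2 ⟨hN.mono fun t h => h.trans (le_max_left N M),
    hM.mono fun t h => h.trans (le_max_right N M)⟩), max N M, fun t ht => ht⟩

theorem CadlagOn.tendsto_rightRiemannSum {f : ℝ → ℝ} (hf : CadlagOn f) (hfm : Measurable f) :
    Tendsto (rightRiemannSum f) atTop (𝓝 (∫ s in (0 : ℝ)..1, f s)) :=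
  let ⟨_, hM⟩ := hf.exists_abs_le 1
  _root_.tendsto_rightRiemannSum hfm hM fun t ht => hf.1 t ht.1.le

section LevyProcess

variable {Ω : Type*} [MeasurableSpace Ω] {μ : Measure Ω}

theorem measurable_rightRiemannSum {Y : ℝ → Ω → ℝ} (hY : Measurable (Function.uncurry Y))
    (n : ℕ) : Measurable fun ω => rightRiemannSum (Y · ω) n :=
  (Finset.measurable_sum _ fun _ _ => hY.comp measurable_prodMk_left).const_mul _

theorem integral_exp_neg_sum_mul_increments {α : ℝ} {Y : ℝ → Ω → ℝ}
    (hmeas : Measurable (Function.uncurry Y)) {n : ℕ} {t : Fin (n + 1) → ℝ}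
    (ht : ∀ i, 0 ≤ t i) (hmono : Monotone t)
    (hindep : iIndepFun (fun (i : Fin n) (ω : Ω) => Y (t i.succ) ω - Y (t i.castSucc) ω) μ)
    (hlaplace : ∀ s t l : ℝ, 0 ≤ s → s ≤ t → 0 ≤ l →
      ∫ ω, Real.exp (-l * (Y t ω - Y s ω)) ∂μ = Real.exp ((t - s) * l ^ α))
    {c : Fin n → ℝ} (hc : ∀ i, 0 ≤ c i) :
    ∫ ω, Real.exp (-∑ i, c i * (Y (t i.succ) ω - Y (t i.castSucc) ω)) ∂μ =
      Real.exp (∑ i, (t i.succ - t i.castSucc) * c i ^ α) := by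
  have hY : ∀ s, Measurable (Y s) := fun s => hmeas.comp measurable_prodMk_left
  simp_rw [← Finset.sum_neg_distrib, ← neg_mul]
  rw [hindep.integral_exp_sum_mul (fun i => (hY _).sub (hY _)), Real.exp_sum]
  exact Finset.prod_congr rfl fun i _ =>
    hlaplace _ _ _ (ht _) (hmono (Fin.castSucc_le_succ i)) (hc i)

theorem integral_exp_neg_mul_rightRiemannSum {α : ℝ} {Y : ℝ → Ω → ℝ}
    (hmeas : Measurable (Function.uncurry Y)) (hzero : ∀ᵐ ω ∂μ, Y 0 ω = 0)
    (hindep : ∀ n : ℕ, ∀ t : Fin (n+1) → ℝ, (∀ i, 0 ≤ t i) → Monotone t →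
      iIndepFun (fun (i : Fin n) (ω : Ω) => Y (t i.succ) ω - Y (t i.castSucc) ω) μ)
    (hlaplace : ∀ s t l : ℝ, 0 ≤ s → s ≤ t → 0 ≤ l →
      ∫ ω, Real.exp (-l * (Y t ω - Y s ω)) ∂μ = Real.exp ((t - s) * l ^ α))
    {l : ℝ} (hl : 0 ≤ l) (n : ℕ) :
    ∫ ω, Real.exp (-l * rightRiemannSum (Y · ω) n) ∂μ =
      Real.exp (l ^ α * rightRiemannSum (· ^ α) n) := by
  set t : Fin (n + 1) → ℝ := fun i => (i : ℝ) / n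
  have hnonneg : ∀ i, 0 ≤ t i := fun i => by positivity
  have hmono : Monotone t := fun i j hij =>
    div_le_div_of_nonneg_right (by exact_mod_cast hij) n.cast_nonneg
  have hweight : ∀ i : Fin n, 0 ≤ ((n : ℝ) - i) / n := fun i => by
    have : (i : ℝ) ≤ n := by exact_mod_cast i.is_lt.le
    exact div_nonneg (by linarith) n.cast_nonneg
  calc ∫ ω, Real.exp (-l * rightRiemannSum (Y · ω) n) ∂μ
      = ∫ ω, Real.exp (-∑ i : Fin n, l * (((n : ℝ) - i) / n) *
          (Y (t i.succ) ω - Y (t i.castSucc) ω)) ∂μ := by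
        refine integral_congr_ae (hzero.mono fun ω h0 => ?_)
        simp only [rightRiemannSum_eq_sum_mul_sub (f := (Y · ω)) h0, t, Finset.mul_sum,
          Fin.val_succ, Fin.val_castSucc, Nat.cast_add, Nat.cast_one, neg_mul, mul_assoc,
          Finset.sum_neg_distrib]
    _ = Real.exp (∑ i : Fin n, (t i.succ - t i.castSucc) * (l * (((n : ℝ) - i) / n)) ^ α) :=
        integral_exp_neg_sum_mul_increments (c := fun i => l * (((n : ℝ) - i) / n)) hmeas
          hnonneg hmono (hindep n _ hnonneg hmono) hlaplace fun i => mul_nonneg hl (hweight i)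
    _ = Real.exp (l ^ α * rightRiemannSum (· ^ α) n) := by
        rw [rightRiemannSum_eq_sum_natCast_sub_div, Finset.mul_sum, Finset.mul_sum]
        refine congrArg _ (Finset.sum_congr rfl fun i _ => ?_)
        rw [Real.mul_rpow hl (hweight i)]
        simp only [t, Fin.val_succ, Fin.val_castSucc, Nat.cast_add, Nat.cast_one, ← sub_div,
          add_sub_cancel_left, one_div]
        ring

end LevyProcess

/-- If `Y₀` is a spectrally positive `α`-stable Lévy process started
from `0`, with `E[exp(-λ(Y₀ t - Y₀ s))] = exp((t-s) λ^α)`, then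
`X = ∫₀¹ Y₀(s) ds` satisfies `E[exp(-λ X)] = exp(λ^α / (α+1))`. -/
theorem laplace_integral_stable_process
    {Ω : Type*} [MeasureSpace Ω] [IsProbabilityMeasure (ℙ : Measure Ω)]
    (α : ℝ) (hα : α ∈ Set.Ioo (1:ℝ) 2)
    (Y₀ : ℝ → Ω → ℝ)
    (hmeas : Measurable (Function.uncurry Y₀))
    (hzero : ∀ᵐ ω ∂ℙ, Y₀ 0 ω = 0)
    (hpath : ∀ᵐ ω ∂ℙ, CadlagOn (fun t => Y₀ t ω))
    (hindep : ∀ n : ℕ, ∀ t : Fin (n+1) → ℝ, (∀ i, 0 ≤ t i) → Monotone t →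
      iIndepFun (m := fun _ : Fin n => (inferInstance : MeasurableSpace ℝ))
        (fun (i : Fin n) (ω : Ω) => Y₀ (t i.succ) ω - Y₀ (t i.castSucc) ω) ℙ)
    (hlaplace : ∀ s t l : ℝ, 0 ≤ s → s ≤ t → 0 ≤ l →
      ∫ ω, Real.exp (-l * (Y₀ t ω - Y₀ s ω)) ∂ℙ = Real.exp ((t - s) * l ^ α)) :
    ∀ l : ℝ, 0 ≤ l →
      ∫ ω, Real.exp (-l * ∫ s in (0:ℝ)..1, Y₀ s ω) ∂ℙ =
        Real.exp (l ^ α / (α + 1)) := by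
  intro l hl
  have hα₀ : 0 ≤ α := zero_le_one.trans hα.1.le
  have hR := measurable_rightRiemannSum hmeas
  have hlaplaceR : ∀ c, 0 ≤ c → ∀ n, ∫ ω, Real.exp (-c * rightRiemannSum (Y₀ · ω) n) =
      Real.exp (c ^ α * rightRiemannSum (· ^ α) n) := fun c hc =>
    integral_exp_neg_mul_rightRiemannSum hmeas hzero hindep hlaplace hc
  have hlim : ∀ c, 0 ≤ c → Tendsto (fun n => ∫ ω, Real.exp (-c * rightRiemannSum (Y₀ · ω) n))
      atTop (𝓝 (Real.exp (c ^ α / (α + 1)))) := fun c hc => by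
    simpa only [hlaplaceR c hc, mul_one_div] using
      ((tendsto_rightRiemannSum_rpow hα₀).const_mul (c ^ α)).rexp
  have hae : ∀ᵐ ω ∂ℙ, Tendsto (fun n => Real.exp (-l * rightRiemannSum (Y₀ · ω) n)) atTop
      (𝓝 (Real.exp (-l * ∫ s in (0:ℝ)..1, Y₀ s ω))) := by
    filter_upwards [hpath] with ω hω
    exact ((hω.tendsto_rightRiemannSum (hmeas.comp measurable_prodMk_right)).const_mul _).rexp
  obtain ⟨C, hC, hL2⟩ : ∃ C ≠ ∞, ∀ n,
      eLpNorm (fun ω => Real.exp (-l * rightRiemannSum (Y₀ · ω) n)) 2 ℙ ≤ C := by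
    obtain ⟨B, hB⟩ := (hlim (2 * l) (by positivity)).bddAbove_range
    refine ⟨ENNReal.ofReal √B, ENNReal.ofReal_ne_top, fun n => ?_⟩
    have hint := hlaplaceR (2 * l) (by positivity) n
    rw [eLpNorm_exp_neg_mul_two (hR n).aestronglyMeasurable l
      (.of_integral_ne_zero (hint ▸ (Real.exp_pos _).ne'))]
    exact ENNReal.ofReal_le_ofReal (Real.sqrt_le_sqrt (hB ⟨n, rfl⟩))
  exact tendsto_nhds_unique (tendsto_integral_of_tendsto_ae_of_eLpNorm_le (by norm_num)
    (fun n => ((hR n).const_mul _).exp.aestronglyMeasurable) hC hL2 hae) (hlim l hl)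
end

section
/- Almost surely, lim_{t → 0⁺} R(t)/t = C_α. -/
open MeasureTheory ProbabilityTheory Filter Set Topology

noncomputable section

/-- `T = inf {s ≥ 0 : Y s ≤ 0}`, the first hitting time of `(-∞, 0]` by `Y`. -/
def Tstop {Ω : Type*} (Y : ℝ → Ω → ℝ) (ω : Ω) : ℝ :=
  sInf {s : ℝ | 0 ≤ s ∧ Y s ω ≤ 0}

/-- `U t = inf {s ≥ 0 : ∫₀ˢ du / Y(u ∧ T) ≥ t}`, the Lamperti time change. -/
def Uproc {Ω : Type*} (Y : ℝ → Ω → ℝ) (t : ℝ) (ω : Ω) : ℝ :=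
  sInf {s : ℝ | 0 ≤ s ∧ t ≤ ∫ u in (0:ℝ)..s, (Y (min u (Tstop Y ω)) ω)⁻¹}

/-- The constant `C_α = α (α-1) Γ(α)`. -/
def Calpha (α : ℝ) : ℝ := α * (α - 1) * Real.Gamma α

/-- `R t = C_α ∫₀^{U t} Y(u)^{-α} du`. -/
def Rproc {Ω : Type*} (α : ℝ) (Y : ℝ → Ω → ℝ) (t : ℝ) (ω : Ω) : ℝ :=
  Calpha α * ∫ u in (0:ℝ)..(Uproc Y t ω), (Y u ω) ^ (-α)

/-- `R⁻¹ t = inf {s ≥ 0 : R s ≥ t}`, the right-continuous inverse of `R`. -/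
def Rinv {Ω : Type*} (α : ℝ) (Y : ℝ → Ω → ℝ) (t : ℝ) (ω : Ω) : ℝ :=
  sInf {s : ℝ | 0 ≤ s ∧ t ≤ Rproc α Y s ω}

/-- The event `A_{t,ε} = {|Y(s) - 1| ≤ ε for all s ∈ [0, 2t]}`. -/
def Aevent {Ω : Type*} (Y : ℝ → Ω → ℝ) (t ε : ℝ) : Set Ω :=
  {ω | ∀ s ∈ Set.Icc (0:ℝ) (2*t), |Y s ω - 1| ≤ ε}

theorem key_pathwise {Ω : Type*} (α : ℝ) (hα : α ∈ Set.Ioo (1:ℝ) 2)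
    (Y : ℝ → Ω → ℝ) (ω : Ω)
    (hZm : Measurable fun u => Y u ω)
    (h0 : Y 0 ω = 1)
    (hrc : Tendsto (fun u => Y u ω) (𝓝[Set.Ici 0] 0) (𝓝 1)) :
    Tendsto (fun t : ℝ => Rproc α Y t ω / t) (𝓝[>] 0) (𝓝 (Calpha α)) := by
  obtain ⟨hα1, hα2⟩ := hα
  have hΓ : 0 < Real.Gamma α := Real.Gamma_pos_of_pos (by linarith)
  have hCpos : 0 < Calpha α := by
    unfold Calpha
    have h1 : (0:ℝ) < α - 1 := by linarith
    positivity
  have hT0 : 0 ≤ Tstop Y ω := Real.sInf_nonneg fun x hx => hx.1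
  rw [Metric.tendsto_nhdsWithin_nhds]
  intro ε' hε'
  -- choose ε small enough
  have hrp1 : ContinuousAt (fun x : ℝ => x ^ (-α)) 1 :=
    Real.continuousAt_rpow_const 1 (-α) (Or.inl one_ne_zero)
  have hhi : Tendsto (fun ε : ℝ => Calpha α * (1+ε) * (1-ε) ^ (-α)) (𝓝 0) (𝓝 (Calpha α)) := by
    have h1 : ContinuousAt (fun ε : ℝ => (1-ε) ^ (-α)) 0 := by
      have h2 : ContinuousAt (fun ε : ℝ => 1 - ε) 0 := by fun_prop
      have h3 : ContinuousAt (fun x : ℝ => x ^ (-α)) ((fun ε : ℝ => (1:ℝ) - ε) 0) := by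
        simpa using hrp1
      exact h3.comp h2
    have h4 : ContinuousAt (fun ε : ℝ => Calpha α * (1+ε) * (1-ε) ^ (-α)) 0 :=
      (continuousAt_const.mul (continuousAt_const.add continuousAt_id)).mul h1
    simpa [Real.one_rpow] using h4.tendsto
  have hlo : Tendsto (fun ε : ℝ => Calpha α * (1-ε) * (1+ε) ^ (-α)) (𝓝 0) (𝓝 (Calpha α)) := by
    have h1 : ContinuousAt (fun ε : ℝ => (1+ε) ^ (-α)) 0 := by
      have h2 : ContinuousAt (fun ε : ℝ => 1 + ε) 0 := by fun_prop
      have h3 : ContinuousAt (fun x : ℝ => x ^ (-α)) ((fun ε : ℝ => (1:ℝ) + ε) 0) := by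
        simpa using hrp1
      exact h3.comp h2
    have h4 : ContinuousAt (fun ε : ℝ => Calpha α * (1-ε) * (1+ε) ^ (-α)) 0 :=
      (continuousAt_const.mul (continuousAt_const.sub continuousAt_id)).mul h1
    simpa [Real.one_rpow] using h4.tendsto
  have hev1 : ∀ᶠ ε in 𝓝[>] (0:ℝ), Calpha α * (1+ε) * (1-ε) ^ (-α) < Calpha α + ε' :=
    ((hhi.mono_left nhdsWithin_le_nhds).eventually_lt_const (by linarith))
  have hev2 : ∀ᶠ ε in 𝓝[>] (0:ℝ), Calpha α - ε' < Calpha α * (1-ε) * (1+ε) ^ (-α) :=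
    ((hlo.mono_left nhdsWithin_le_nhds).eventually_const_lt (by linarith))
  have hev3 : ∀ᶠ ε in 𝓝[>] (0:ℝ), ε < 1/2 :=
    eventually_nhdsWithin_of_eventually_nhds (eventually_lt_nhds (by norm_num))
  have hev4 : ∀ᶠ ε in 𝓝[>] (0:ℝ), 0 < ε := self_mem_nhdsWithin
  obtain ⟨ε, ⟨⟨hhiε, hloε⟩, hε12⟩, hε⟩ := (((hev1.and hev2).and hev3).and hev4).exists
  have h1ε : (0:ℝ) < 1 - ε := by linarith
  have h1ε' : (0:ℝ) < 1 + ε := by linarith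
  -- choose δ
  rw [Metric.tendsto_nhdsWithin_nhds] at hrc
  obtain ⟨δ₁, hδ₁, hδprop⟩ := hrc ε hε
  set δ := δ₁ / 2 with hδdef
  have hδ : 0 < δ := by positivity
  have hband : ∀ u ∈ Icc (0:ℝ) δ, 1 - ε ≤ Y u ω ∧ Y u ω ≤ 1 + ε := by
    intro u hu
    have := hδprop (x := u) hu.1 (by
      rw [Real.dist_eq, sub_zero, abs_of_nonneg hu.1]
      have : u ≤ δ₁ / 2 := hu.2
      linarith)
    rw [Real.dist_eq] at this
    have := abs_le.mp this.le
    constructor <;> linarith [this.1, this.2]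
  -- provide δ'
  refine ⟨δ / (1 + ε), by positivity, ?_⟩
  intro t ht hdist
  have ht : 0 < t := ht
  rw [Real.dist_eq, sub_zero, abs_of_nonneg ht.le] at hdist
  have htδ : t * (1 + ε) < δ := (lt_div_iff₀ h1ε').mp hdist
  -- f band
  set T := Tstop Y ω with hTdef
  set f : ℝ → ℝ := fun u => (Y (min u T) ω)⁻¹ with hfdef
  have hfb : ∀ u ∈ Icc (0:ℝ) δ, (1+ε)⁻¹ ≤ f u ∧ f u ≤ (1-ε)⁻¹ := by
    intro u hu
    have hm : min u T ∈ Icc (0:ℝ) δ := ⟨le_min hu.1 hT0, (min_le_left _ _).trans hu.2⟩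
    obtain ⟨ha, hb⟩ := hband _ hm
    have hpos : 0 < Y (min u T) ω := lt_of_lt_of_le h1ε ha
    exact ⟨inv_anti₀ hpos hb, inv_anti₀ h1ε ha⟩
  have hfm : Measurable f := (hZm.comp (measurable_id.min measurable_const)).inv
  have hfint : ∀ s, 0 ≤ s → s ≤ δ → IntervalIntegrable f volume 0 s := by
    intro s hs0 hsδ
    rw [intervalIntegrable_iff, uIoc_of_le hs0]
    apply Measure.integrableOn_of_bounded (M := (1-ε)⁻¹) measure_Ioc_lt_top.ne
      hfm.aestronglyMeasurable
    filter_upwards [ae_restrict_mem measurableSet_Ioc] with u hu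
    obtain ⟨h1, h2⟩ := hfb u ⟨hu.1.le, hu.2.trans hsδ⟩
    rw [Real.norm_eq_abs, abs_of_nonneg (le_trans (by positivity) h1)]
    exact h2
  have hFlb : ∀ s, 0 ≤ s → s ≤ δ → s * (1+ε)⁻¹ ≤ ∫ u in (0:ℝ)..s, f u := by
    intro s hs0 hsδ
    have := intervalIntegral.integral_mono_on hs0
      (intervalIntegrable_const (c := (1+ε)⁻¹)) (hfint s hs0 hsδ)
      (fun u hu => (hfb u ⟨hu.1, hu.2.trans hsδ⟩).1)
    simpa [smul_eq_mul, mul_comm] using this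
  have hFub : ∀ s, 0 ≤ s → s ≤ δ → (∫ u in (0:ℝ)..s, f u) ≤ s * (1-ε)⁻¹ := by
    intro s hs0 hsδ
    have := intervalIntegral.integral_mono_on hs0 (hfint s hs0 hsδ)
      (intervalIntegrable_const (c := (1-ε)⁻¹))
      (fun u hu => (hfb u ⟨hu.1, hu.2.trans hsδ⟩).2)
    simpa [smul_eq_mul, mul_comm] using this
  -- U bounds
  have hUdef : Uproc Y t ω = sInf {s : ℝ | 0 ≤ s ∧ t ≤ ∫ u in (0:ℝ)..s, f u} := rfl
  set s₀ := (1 + ε) * t with hs₀def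
  have hs₀δ : s₀ ≤ δ := by rw [hs₀def]; nlinarith
  have hs₀0 : 0 ≤ s₀ := by positivity
  have hs₀mem : s₀ ∈ {s : ℝ | 0 ≤ s ∧ t ≤ ∫ u in (0:ℝ)..s, f u} := by
    refine ⟨hs₀0, ?_⟩
    have := hFlb s₀ hs₀0 hs₀δ
    have heq : s₀ * (1+ε)⁻¹ = t := by
      rw [hs₀def]; field_simp
    linarith [heq ▸ this]
  have hUub : Uproc Y t ω ≤ s₀ := by
    rw [hUdef]; exact csInf_le ⟨0, fun s hs => hs.1⟩ hs₀mem
  have hUlb : (1 - ε) * t ≤ Uproc Y t ω := by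
    rw [hUdef]
    refine le_csInf ⟨s₀, hs₀mem⟩ ?_
    rintro s ⟨hs0, hts⟩
    by_cases hsδ : s ≤ δ
    · have h2 := (hts.trans (hFub s hs0 hsδ))
      calc (1-ε) * t ≤ (1-ε) * (s * (1-ε)⁻¹) := by
            exact mul_le_mul_of_nonneg_left h2 h1ε.le
        _ = s := by field_simp
    · push_neg at hsδ
      nlinarith
  have hU0 : 0 < Uproc Y t ω := lt_of_lt_of_le (by positivity) hUlb
  have hUδ : Uproc Y t ω ≤ δ := hUub.trans hs₀δ
  -- g bounds
  set U := Uproc Y t ω with hUdef2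
  have hgb : ∀ u ∈ Icc (0:ℝ) U,
      (1+ε) ^ (-α) ≤ (Y u ω) ^ (-α) ∧ (Y u ω) ^ (-α) ≤ (1-ε) ^ (-α) := by
    intro u hu
    obtain ⟨ha, hb⟩ := hband u ⟨hu.1, hu.2.trans hUδ⟩
    have hYpos : 0 < Y u ω := lt_of_lt_of_le h1ε ha
    constructor
    · rw [Real.rpow_neg hYpos.le, Real.rpow_neg h1ε'.le]
      exact inv_anti₀ (Real.rpow_pos_of_pos hYpos α)
        (Real.rpow_le_rpow hYpos.le hb (by linarith))
    · rw [Real.rpow_neg hYpos.le, Real.rpow_neg h1ε.le]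
      exact inv_anti₀ (Real.rpow_pos_of_pos h1ε α)
        (Real.rpow_le_rpow h1ε.le ha (by linarith))
  have hgm : Measurable fun u => (Y u ω) ^ (-α) := by fun_prop
  have hgint : IntervalIntegrable (fun u => (Y u ω) ^ (-α)) volume 0 U := by
    rw [intervalIntegrable_iff, uIoc_of_le hU0.le]
    apply Measure.integrableOn_of_bounded (M := (1-ε) ^ (-α)) measure_Ioc_lt_top.ne
      hgm.aestronglyMeasurable
    filter_upwards [ae_restrict_mem measurableSet_Ioc] with u hu
    obtain ⟨h1, h2⟩ := hgb u ⟨hu.1.le, hu.2⟩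
    rw [Real.norm_eq_abs, abs_of_nonneg (le_trans (by positivity) h1)]
    exact h2
  have hIlb : U * (1+ε) ^ (-α) ≤ ∫ u in (0:ℝ)..U, (Y u ω) ^ (-α) := by
    have := intervalIntegral.integral_mono_on hU0.le
      (intervalIntegrable_const (c := (1+ε) ^ (-α))) hgint (fun u hu => (hgb u hu).1)
    simpa [smul_eq_mul, mul_comm] using this
  have hIub : (∫ u in (0:ℝ)..U, (Y u ω) ^ (-α)) ≤ U * (1-ε) ^ (-α) := by
    have := intervalIntegral.integral_mono_on hU0.le hgint
      (intervalIntegrable_const (c := (1-ε) ^ (-α))) (fun u hu => (hgb u hu).2)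
    simpa [smul_eq_mul, mul_comm] using this
  -- conclude
  have hRdef : Rproc α Y t ω = Calpha α * ∫ u in (0:ℝ)..U, (Y u ω) ^ (-α) := rfl
  have hc1pos : 0 < (1+ε) ^ (-α) := Real.rpow_pos_of_pos h1ε' _
  have hc2pos : 0 < (1-ε) ^ (-α) := Real.rpow_pos_of_pos h1ε _
  have hRub : Rproc α Y t ω ≤ (Calpha α * (1+ε) * (1-ε) ^ (-α)) * t := by
    rw [hRdef]
    calc Calpha α * ∫ u in (0:ℝ)..U, (Y u ω) ^ (-α)
        ≤ Calpha α * (U * (1-ε) ^ (-α)) := by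
          exact mul_le_mul_of_nonneg_left hIub hCpos.le
      _ ≤ Calpha α * (((1+ε) * t) * (1-ε) ^ (-α)) := by
          apply mul_le_mul_of_nonneg_left _ hCpos.le
          exact mul_le_mul_of_nonneg_right (hUub.trans_eq rfl) hc2pos.le
      _ = (Calpha α * (1+ε) * (1-ε) ^ (-α)) * t := by ring
  have hRlb : (Calpha α * (1-ε) * (1+ε) ^ (-α)) * t ≤ Rproc α Y t ω := by
    rw [hRdef]
    calc (Calpha α * (1-ε) * (1+ε) ^ (-α)) * t
        = Calpha α * (((1-ε) * t) * (1+ε) ^ (-α)) := by ring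
      _ ≤ Calpha α * (U * (1+ε) ^ (-α)) := by
          apply mul_le_mul_of_nonneg_left _ hCpos.le
          exact mul_le_mul_of_nonneg_right hUlb hc1pos.le
      _ ≤ Calpha α * ∫ u in (0:ℝ)..U, (Y u ω) ^ (-α) := by
          exact mul_le_mul_of_nonneg_left hIlb hCpos.le
  have hdiv1 : Calpha α * (1-ε) * (1+ε) ^ (-α) ≤ Rproc α Y t ω / t := (le_div_iff₀ ht).mpr hRlb
  have hdiv2 : Rproc α Y t ω / t ≤ Calpha α * (1+ε) * (1-ε) ^ (-α) := (div_le_iff₀ ht).mpr hRub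
  rw [Real.dist_eq, abs_lt]
  constructor <;> linarith


/-- Almost surely, `R(t)/t → C_α` as `t → 0⁺`. -/
theorem R_speed_at_zero
    {Ω : Type*} [MeasureSpace Ω] [IsProbabilityMeasure (ℙ : Measure Ω)]
    (α : ℝ) (hα : α ∈ Set.Ioo (1:ℝ) 2)
    (Y : ℝ → Ω → ℝ)
    (hmeas : Measurable (Function.uncurry Y))
    (hstart : ∀ᵐ ω ∂ℙ, Y 0 ω = 1)
    (hpath : ∀ᵐ ω ∂ℙ, CadlagOn (fun t => Y t ω))
    (hscale : ∀ c : ℝ, 0 < c →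
      Measure.map (fun ω => fun t : Set.Ici (0:ℝ) => Y (t : ℝ) ω - 1) ℙ =
      Measure.map (fun ω => fun t : Set.Ici (0:ℝ) => c ^ (α⁻¹) * (Y ((t : ℝ) / c) ω - 1)) ℙ)
    (hsmall : ∃ C : ℝ, 0 < C ∧ ∀ t : ℝ, 0 < t → ∀ ε ∈ Set.Ioo (0:ℝ) 1,
      ℙ {ω | ∃ s ∈ Set.Icc (0:ℝ) (2*t), ε < |Y s ω - 1|} ≤ ENNReal.ofReal (C * t * ε ^ (-α)))
    : ∀ᵐ ω ∂ℙ, Tendsto (fun t : ℝ => Rproc α Y t ω / t) (𝓝[>] 0) (𝓝 (Calpha α)) := by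
  filter_upwards [hstart, hpath] with ω h0 hc
  have hZm : Measurable fun u => Y u ω :=
    hmeas.comp (measurable_id.prodMk measurable_const)
  have hrc : Tendsto (fun u => Y u ω) (𝓝[Set.Ici 0] 0) (𝓝 1) := by
    simpa [h0] using hc.1 0 le_rfl
  exact key_pathwise α hα Y ω hZm h0 hrc
end
end

section
/- The random variable t^{−1−1/α} ∫_t^{U(t)} Y₀(s) ds converges to 0 in probability as t → 0⁺; that is, for every η > 0, lim_{t → 0⁺} ℙ(|∫_t^{U(t)} Y₀(s) ds| ≥ η t^{1+1/α}) = 0. -/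
/-!
On the event `A_{t,ε}` that `Y` stays within `ε < 1` of `1` on `[0, 2t]`, the integrand
`1 / Y(u ∧ T)` of the Lamperti clock lies between `1 / (1 + ε)` and `1 / (1 - ε)`, so
`U(t) ∈ [t(1 - ε), t(1 + ε)]` and `|∫_t^{U(t)} Y₀| ≤ ε |U(t) - t| ≤ ε² t`.
With `ε_t = (√η / 2) t^{1/(2α)}` we get `ε_t² t < η t^{1 + 1/α}`, so the event in question lies
outside `A_{t,ε_t}`, whose probability is at most `C t ε_t^{-α} = C (√η / 2)^{-α} t^{1/2} → 0`.
-/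

open MeasureTheory ProbabilityTheory Filter Set Topology

noncomputable section

theorem tendsto_rpow_nhdsGT_zero {p : ℝ} (hp : 0 < p) :
    Tendsto (fun t : ℝ => t ^ p) (𝓝[>] 0) (𝓝 0) :=
  ((Real.continuous_rpow_const hp.le).tendsto' 0 0 (Real.zero_rpow hp.ne')).mono_left
    nhdsWithin_le_nhds

theorem integral_inv_mem_Icc {y : ℝ → ℝ} {m M s : ℝ} (hm : 0 < m) (hs : 0 ≤ s)
    (hy : Measurable y) (hbound : ∀ u ∈ Icc 0 s, y u ∈ Icc m M) :
    ∫ u in (0:ℝ)..s, (y u)⁻¹ ∈ Icc (s * M⁻¹) (s * m⁻¹) := by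
  have hinv : ∀ u ∈ Icc 0 s, (y u)⁻¹ ∈ Icc M⁻¹ m⁻¹ := fun u hu =>
    ⟨inv_anti₀ (hm.trans_le (hbound u hu).1) (hbound u hu).2, inv_anti₀ hm (hbound u hu).1⟩
  have hint : IntervalIntegrable (fun u => (y u)⁻¹) volume 0 s := by
    refine (intervalIntegrable_const (c := m⁻¹)).mono_fun' hy.inv.aestronglyMeasurable
      (ae_restrict_of_forall_mem measurableSet_uIoc fun u hu => ?_)
    rw [uIoc_of_le hs] at hu
    obtain ⟨hlo, hhi⟩ := hbound u (Ioc_subset_Icc_self hu)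
    show ‖(y u)⁻¹‖ ≤ m⁻¹
    rw [Real.norm_eq_abs, abs_inv, abs_of_pos (hm.trans_le hlo)]
    exact inv_anti₀ hm hlo
  have hconst (c : ℝ) : ∫ _ in (0:ℝ)..s, c = s * c := by simp
  constructor
  · simpa [hconst] using intervalIntegral.integral_mono_on hs
      intervalIntegrable_const hint fun u hu => (hinv u hu).1
  · simpa [hconst] using intervalIntegral.integral_mono_on hs
      hint intervalIntegrable_const fun u hu => (hinv u hu).2

theorem sInf_setOf_le_integral_inv_mem_Icc {y : ℝ → ℝ} {m M t : ℝ} (hm : 0 < m) (hmM : m ≤ M)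
    (ht : 0 ≤ t) (hy : Measurable y) (hbound : ∀ u ∈ Icc 0 (t * M), y u ∈ Icc m M) :
    sInf {s | 0 ≤ s ∧ t ≤ ∫ u in (0:ℝ)..s, (y u)⁻¹} ∈ Icc (t * m) (t * M) := by
  have hM : 0 < M := hm.trans_le hmM
  have htM : t * M ∈ {s | 0 ≤ s ∧ t ≤ ∫ u in (0:ℝ)..s, (y u)⁻¹} := by
    refine ⟨by positivity, ?_⟩
    simpa [mul_inv_cancel_right₀ hM.ne'] using
      (integral_inv_mem_Icc hm (by positivity) hy hbound).1
  refine ⟨le_csInf ⟨_, htM⟩ fun s hs => ?_, csInf_le ⟨0, fun s hs => hs.1⟩ htM⟩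
  by_contra! hlt
  have hsM : s ≤ t * M := hlt.le.trans (by gcongr)
  have hupper := (integral_inv_mem_Icc hm hs.1 hy fun u hu =>
    hbound u ⟨hu.1, hu.2.trans hsM⟩).2
  have : s * m⁻¹ < t := by rwa [← div_eq_mul_inv, div_lt_iff₀ hm]
  linarith [hs.2]

section Aevent

variable {Ω : Type*} {Y : ℝ → Ω → ℝ} {ω : Ω} {t ε : ℝ}

theorem Tstop_nonneg : 0 ≤ Tstop Y ω := Real.sInf_nonneg fun _ hs => hs.1

theorem compl_Aevent :
    (Aevent Y t ε)ᶜ = {ω | ∃ s ∈ Icc (0:ℝ) (2 * t), ε < |Y s ω - 1|} := by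
  ext ω
  simp [Aevent, and_assoc]

theorem nonneg_of_mem_Aevent (ht : 0 ≤ t) (hA : ω ∈ Aevent Y t ε) : 0 ≤ ε :=
  (abs_nonneg _).trans (hA 0 ⟨le_rfl, by positivity⟩)

theorem Uproc_mem_Icc_of_mem_Aevent (hY : Measurable fun s => Y s ω) (ht : 0 < t)
    (hε : ε < 1) (hA : ω ∈ Aevent Y t ε) :
    Uproc Y t ω ∈ Icc (t * (1 - ε)) (t * (1 + ε)) := by
  have hε0 := nonneg_of_mem_Aevent ht.le hA
  refine sInf_setOf_le_integral_inv_mem_Icc (by linarith) (by linarith) ht.le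
    (hY.comp (measurable_id.min measurable_const)) fun u hu => ?_
  have hmin : min u (Tstop Y ω) ∈ Icc 0 (2 * t) :=
    ⟨le_min hu.1 Tstop_nonneg, (min_le_left _ _).trans (hu.2.trans (by nlinarith))⟩
  obtain ⟨hlo, hhi⟩ := abs_le.1 (hA _ hmin)
  exact ⟨by linarith, by linarith⟩

theorem abs_integral_sub_one_le_of_mem_Aevent (hY : Measurable fun s => Y s ω) (ht : 0 < t)
    (hε : ε < 1) (hA : ω ∈ Aevent Y t ε) :
    |∫ s in t..Uproc Y t ω, (Y s ω - 1)| ≤ ε * (ε * t) := by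
  have hε0 := nonneg_of_mem_Aevent ht.le hA
  obtain ⟨hUlo, hUhi⟩ := Uproc_mem_Icc_of_mem_Aevent hY ht hε hA
  have hsub : uIoc t (Uproc Y t ω) ⊆ Icc 0 (2 * t) := fun x hx =>
    ⟨le_min ht.le (by nlinarith) |>.trans (uIoc_subset_uIcc hx).1,
      (uIoc_subset_uIcc hx).2.trans (max_le (by linarith) (by nlinarith))⟩
  calc |∫ s in t..Uproc Y t ω, (Y s ω - 1)|
      ≤ ε * |Uproc Y t ω - t| := by
        simpa only [Real.norm_eq_abs] using intervalIntegral.norm_integral_le_of_norm_le_const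
          (f := fun s => Y s ω - 1) fun x hx => hA x (hsub hx)
    _ ≤ ε * (ε * t) := by
        gcongr
        exact abs_sub_le_iff.2 ⟨by linarith, by linarith⟩

end Aevent

def threshold (η α t : ℝ) : ℝ := √η / 2 * t ^ (2 * α)⁻¹

section threshold

variable {η α t : ℝ}

theorem threshold_pos (hη : 0 < η) (ht : 0 < t) : 0 < threshold η α t := by
  unfold threshold
  positivity

theorem threshold_mul_threshold_mul_lt (hη : 0 < η) (ht : 0 < t) :
    threshold η α t * (threshold η α t * t) < η * t ^ (1 + 1 / α) := by
  have hsq : threshold η α t * threshold η α t = η / 4 * t ^ α⁻¹ := by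
    rw [threshold, mul_mul_mul_comm, ← Real.rpow_add ht, div_mul_div_comm,
      Real.mul_self_sqrt hη.le]
    ring_nf
  rw [← mul_assoc, hsq, Real.rpow_add ht, Real.rpow_one, one_div]
  have : 0 < t * t ^ α⁻¹ := by positivity
  nlinarith

theorem tendsto_threshold (hα : 0 < α) : Tendsto (threshold η α) (𝓝[>] 0) (𝓝 0) := by
  have h := (tendsto_rpow_nhdsGT_zero (by positivity : 0 < (2 * α)⁻¹)).const_mul (√η / 2)
  rwa [mul_zero] at h

theorem tendsto_mul_threshold_rpow_neg (hη : 0 < η) (hα : 0 < α) :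
    Tendsto (fun t => t * threshold η α t ^ (-α)) (𝓝[>] 0) (𝓝 0) := by
  have hsqrt : Tendsto (fun t : ℝ => (√η / 2) ^ (-α) * t ^ (1 / 2 : ℝ)) (𝓝[>] 0) (𝓝 0) := by
    simpa using (tendsto_rpow_nhdsGT_zero (by norm_num : (0:ℝ) < 1 / 2)).const_mul ((√η / 2) ^ (-α))
  refine hsqrt.congr' (eventually_nhdsWithin_of_forall fun t (ht : 0 < t) => ?_)
  have hexp : (2 * α)⁻¹ * -α = -(1 / 2) := by field_simp
  dsimp only
  rw [threshold, Real.mul_rpow (by positivity) (by positivity), ← Real.rpow_mul ht.le, hexp,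
    mul_left_comm, ← Real.rpow_one_add' ht.le (by norm_num)]
  norm_num

end threshold

theorem remainder_integral_vanishes_in_probability_general
    {Ω : Type*} [MeasureSpace Ω]
    (α : ℝ) (hα : α ∈ Set.Ioo (1:ℝ) 2)
    (Y : ℝ → Ω → ℝ)
    (hmeas : Measurable (Function.uncurry Y))
    (hsmall : ∃ C : ℝ, 0 < C ∧ ∀ t : ℝ, 0 < t → ∀ ε ∈ Set.Ioo (0:ℝ) 1,
      ℙ {ω | ∃ s ∈ Set.Icc (0:ℝ) (2*t), ε < |Y s ω - 1|} ≤ ENNReal.ofReal (C * t * ε ^ (-α)))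
    : ∀ η : ℝ, 0 < η →
      Tendsto (fun t : ℝ => ℙ {ω |
          η * t ^ (1 + 1/α) ≤ |∫ s in t..(Uproc Y t ω), (Y s ω - 1)|})
        (𝓝[>] 0) (𝓝 0) := by
  intro η hη
  obtain ⟨C, -, hC⟩ := hsmall
  have hα0 : 0 < α := one_pos.trans hα.1
  have hlt_one : ∀ᶠ t in 𝓝[>] 0, threshold η α t < 1 :=
    (tendsto_threshold hα0).eventually_lt_const one_pos
  have hle : ∀ᶠ t in 𝓝[>] 0,
      ℙ {ω | η * t ^ (1 + 1/α) ≤ |∫ s in t..(Uproc Y t ω), (Y s ω - 1)|} ≤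
        ENNReal.ofReal (C * t * threshold η α t ^ (-α)) := by
    filter_upwards [self_mem_nhdsWithin, hlt_one] with t (ht : 0 < t) hε
    have htail := hC t ht _ ⟨threshold_pos hη ht, hε⟩
    rw [← compl_Aevent] at htail
    refine (measure_mono fun ω hω hA => ?_).trans htail
    exact (abs_integral_sub_one_le_of_mem_Aevent hmeas.of_uncurry_right ht hε hA).not_gt
      ((threshold_mul_threshold_mul_lt hη ht).trans_le hω)
  have hbound : Tendsto (fun t => ENNReal.ofReal (C * t * threshold η α t ^ (-α))) (𝓝[>] 0)
      (𝓝 0) := by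
    simpa [mul_assoc] using ENNReal.tendsto_ofReal
      ((tendsto_mul_threshold_rpow_neg hη hα0).const_mul C)
  exact tendsto_of_tendsto_of_tendsto_of_le_of_le' tendsto_const_nhds hbound
    (.of_forall fun _ => zero_le) hle

/-- `t^(-1-1/α) ∫_t^{U(t)} Y₀(s) ds` converges to `0` in probability
as `t → 0⁺`. -/
theorem remainder_integral_vanishes_in_probability
    {Ω : Type*} [MeasureSpace Ω] [IsProbabilityMeasure (ℙ : Measure Ω)]
    (α : ℝ) (hα : α ∈ Set.Ioo (1:ℝ) 2)
    (Y : ℝ → Ω → ℝ)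
    (hmeas : Measurable (Function.uncurry Y))
    (hstart : ∀ᵐ ω ∂ℙ, Y 0 ω = 1)
    (hpath : ∀ᵐ ω ∂ℙ, CadlagOn (fun t => Y t ω))
    (hscale : ∀ c : ℝ, 0 < c →
      Measure.map (fun ω => fun t : Set.Ici (0:ℝ) => Y (t : ℝ) ω - 1) ℙ =
      Measure.map (fun ω => fun t : Set.Ici (0:ℝ) => c ^ (α⁻¹) * (Y ((t : ℝ) / c) ω - 1)) ℙ)
    (hsmall : ∃ C : ℝ, 0 < C ∧ ∀ t : ℝ, 0 < t → ∀ ε ∈ Set.Ioo (0:ℝ) 1,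
      ℙ {ω | ∃ s ∈ Set.Icc (0:ℝ) (2*t), ε < |Y s ω - 1|} ≤ ENNReal.ofReal (C * t * ε ^ (-α)))
    : ∀ η : ℝ, 0 < η →
      Tendsto (fun t : ℝ => ℙ {ω |
          η * t ^ (1 + 1/α) ≤ |∫ s in t..(Uproc Y t ω), (Y s ω - 1)|})
        (𝓝[>] 0) (𝓝 0) :=
  remainder_integral_vanishes_in_probability_general α hα Y hmeas hsmall
end
end
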